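/- arXiv:1308.5511 — 3 statements merged into one kernel-verified Lean document; each statement's English description precedes it below -/
import Mathlib

section
/- Assume (HFC) and (HBC)(i)-(ii), with A ⊂ ℝ^q compact, and set r = max(2, h). Then there exist constants C̄ > 0 and ρ > 0 such that the function v̄(t,x) := C̄ e^{ρ(T−t)}(1 + |x|^r) satisfies: (a) v̄(T,x) ≥ g(x) for all x ∈ ℝ^d, and (b) −∂_t v̄(t,x) − sup_{a∈A} [ b(x,a)·D_x v̄(t,x) + ½ tr(σσᵀ(x,a) D_x² v̄(t,x)) + f(x, a, v̄(t,x), σᵀ(x,a) D_x v̄(t,x)) ] ≥ 0 for all (t,x) ∈ [0,T] × ℝ^d; that is, v̄ is a classical (smooth) supersolution of the Hamilton–Jacobi–Bellman equation. -/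
set_option synthInstance.maxHeartbeats 400000
set_option maxHeartbeats 2000000

open Set

/-- The candidate supersolution `v̄(t,x) = C̄ e^{ρ(T-t)} (1 + |x|^r)`. -/
noncomputable def vbar (d : ℕ) (T Cb ρ r : ℝ) (t : ℝ) (x : EuclideanSpace ℝ (Fin d)) : ℝ :=
  Cb * Real.exp (ρ * (T - t)) * (1 + ‖x‖ ^ r)


open Set

namespace HJBaux

variable {d : ℕ}

local notation "E" => EuclideanSpace ℝ (Fin d)

theorem coord_le_norm (v : E) (i : Fin d) : |v i| ≤ ‖v‖ := by
  have h : v i = inner ℝ (EuclideanSpace.single i (1:ℝ)) v := by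
    rw [EuclideanSpace.inner_single_left]; simp
  rw [h]
  calc |(inner ℝ (EuclideanSpace.single i (1:ℝ)) v : ℝ)| ≤ ‖EuclideanSpace.single i (1:ℝ)‖ * ‖v‖ :=
        abs_real_inner_le_norm _ _
    _ = 1 * ‖v‖ := by rw [EuclideanSpace.norm_single, norm_one]
    _ = ‖v‖ := one_mul _

theorem trace_abs_le (L : E →L[ℝ] E) :
    |LinearMap.trace ℝ (EuclideanSpace ℝ (Fin d)) (L : E →ₗ[ℝ] E)| ≤ d * ‖L‖ := by
  rw [LinearMap.trace_eq_matrix_trace ℝ (EuclideanSpace.basisFun (Fin d) ℝ).toBasis]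
  rw [Matrix.trace]
  have key : ∀ i : Fin d, |(LinearMap.toMatrix (EuclideanSpace.basisFun (Fin d) ℝ).toBasis
      (EuclideanSpace.basisFun (Fin d) ℝ).toBasis (L : E →ₗ[ℝ] E)).diag i| ≤ ‖L‖ := by
    intro i
    rw [Matrix.diag, LinearMap.toMatrix_apply]
    simp only [OrthonormalBasis.coe_toBasis_repr_apply, OrthonormalBasis.coe_toBasis,
      EuclideanSpace.basisFun_apply, EuclideanSpace.basisFun_repr, ContinuousLinearMap.coe_coe]
    refine (coord_le_norm _ _).trans ?_
    calc ‖L (EuclideanSpace.single i 1)‖ ≤ ‖L‖ * ‖EuclideanSpace.single i (1:ℝ)‖ := L.le_opNorm _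
      _ = ‖L‖ * 1 := by rw [EuclideanSpace.norm_single, norm_one]
      _ = ‖L‖ := mul_one _
  calc |∑ i, _| ≤ ∑ i : Fin d, ‖L‖ :=
        (Finset.abs_sum_le_sum_abs _ _).trans (Finset.sum_le_sum fun i _ => key i)
    _ = d * ‖L‖ := by rw [Finset.sum_const, Finset.card_univ, Fintype.card_fin, nsmul_eq_mul]

theorem sq_rpow (x : E) (p : ℝ) : (‖x‖ ^ (2:ℕ) : ℝ) ^ p = ‖x‖ ^ (2 * p) := by
  rw [← Real.rpow_natCast ‖x‖ 2, ← Real.rpow_mul (norm_nonneg x)]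
  norm_num

/-- Fréchet derivative of `y ↦ ‖y‖ ^ p` (real power). -/
theorem grad_norm_rpow {p : ℝ} (x : E) (hx : x ≠ 0 ∨ 2 ≤ p) :
    HasFDerivAt (fun y : E => ‖y‖ ^ p) ((p * ‖x‖ ^ (p - 2)) • (innerSL ℝ x : E →L[ℝ] ℝ)) x := by
  have h1 : HasFDerivAt (fun y : E => (inner ℝ y y : ℝ)) ((2:ℕ) • (innerSL ℝ x : E →L[ℝ] ℝ)) x := by
    have := (hasFDerivAt_id x).inner ℝ (hasFDerivAt_id x)
    convert this using 1
    · rfl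
    · rfl
    · rfl
    · rfl
    ext y
    simp [two_smul, real_inner_comm, mul_comm]
  have h2 : HasDerivAt (fun s : ℝ => s ^ (p/2)) ((p/2) * (inner ℝ x x : ℝ) ^ (p/2 - 1))
      (inner ℝ x x : ℝ) := by
    refine Real.hasDerivAt_rpow_const ?_
    rcases hx with hx | hp
    · exact Or.inl (by
        rw [real_inner_self_eq_norm_sq]
        exact pow_ne_zero 2 (norm_ne_zero_iff.2 hx))
    · exact Or.inr (by linarith)
  have h3 := HasDerivAt.comp_hasFDerivAt (f := fun y : E => (inner ℝ y y : ℝ)) x h2 h1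
  have heq : (fun y : E => (inner ℝ y y : ℝ) ^ (p/2)) = fun y : E => ‖y‖ ^ p := by
    funext y
    rw [real_inner_self_eq_norm_sq, sq_rpow, show (2:ℝ) * (p/2) = p by ring]
  simp only [Function.comp_def] at h3
  rw [heq] at h3
  have hc : (‖x‖ ^ (2:ℕ) : ℝ) ^ (p/2 - 1) = ‖x‖ ^ (p - 2) := by
    rw [sq_rpow, show (2:ℝ) * (p/2 - 1) = p - 2 by ring]
  have heq2 : (p * ‖x‖ ^ (p - 2)) • (innerSL ℝ x : E →L[ℝ] ℝ)
      = (p / 2 * (inner ℝ x x : ℝ) ^ (p / 2 - 1)) • (2:ℕ) • (innerSL ℝ x : E →L[ℝ] ℝ) := by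
    ext y
    simp only [ContinuousLinearMap.smul_apply, smul_eq_mul, ContinuousLinearMap.coe_smul',
      Pi.smul_apply, nsmul_eq_mul, Nat.cast_ofNat, real_inner_self_eq_norm_sq, hc]
    ring
  rw [heq2]
  exact h3

end HJBaux

namespace HJBaux

variable {d : ℕ}
local notation "E" => EuclideanSpace ℝ (Fin d)

/-- Fréchet derivative of the (scaled) gradient field `y ↦ ‖y‖^(r-2) • y`. -/
theorem hess_norm_rpow {r : ℝ} (hr : 2 ≤ r) (x : E) :
    HasFDerivAt (fun y : E => ‖y‖ ^ (r-2) • y)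
      ((((r-2) * ‖x‖ ^ (r-4)) • (innerSL ℝ x : E →L[ℝ] ℝ).smulRight x
        + ‖x‖ ^ (r-2) • ContinuousLinearMap.id ℝ E) : E →L[ℝ] E) x := by
  rcases eq_or_ne x 0 with rfl | hx
  · rcases eq_or_lt_of_le hr with hr2 | hr2
    · -- r = 2 : the map is the identity
      have hr0 : r - 2 = 0 := by rw [← hr2]; ring
      have heq : (fun y : E => ‖y‖ ^ (r-2) • y) = fun y : E => y := by
        funext y; rw [hr0, Real.rpow_zero, one_smul]
      have hD : (((r-2) * ‖(0:E)‖ ^ (r-4)) • (innerSL ℝ (0:E) : E →L[ℝ] ℝ).smulRight (0:E)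
          + ‖(0:E)‖ ^ (r-2) • ContinuousLinearMap.id ℝ E) = ContinuousLinearMap.id ℝ E := by
        ext y
        simp [hr0, Real.rpow_zero]
      rw [heq, hD]
      exact hasFDerivAt_id 0
    · -- r > 2 : derivative is zero
      have hne : r - 2 ≠ 0 := by linarith
      have hD : (((r-2) * ‖(0:E)‖ ^ (r-4)) • (innerSL ℝ (0:E) : E →L[ℝ] ℝ).smulRight (0:E)
          + ‖(0:E)‖ ^ (r-2) • ContinuousLinearMap.id ℝ E) = 0 := by
        ext y
        simp [Real.zero_rpow hne]
      rw [hD]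
      rw [hasFDerivAt_iff_isLittleO_nhds_zero]
      simp only [zero_add, norm_zero, Real.zero_rpow hne, zero_smul, sub_zero,
        ContinuousLinearMap.zero_apply]
      rw [Asymptotics.isLittleO_iff]
      intro ε hε
      have tcont : ContinuousAt (fun s : ℝ => s ^ (r-2)) 0 :=
        Real.continuousAt_rpow_const 0 (r-2) (Or.inr (by linarith))
      have htd : Filter.Tendsto (fun y : E => ‖y‖ ^ (r-2)) (nhds 0) (nhds 0) := by
        have : Filter.Tendsto (fun y : E => ‖y‖) (nhds 0) (nhds 0) := by
          simpa using continuous_norm.tendsto (0:E)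
        simpa [Real.zero_rpow hne, Function.comp_def] using (tcont.tendsto.comp this)
      filter_upwards [htd.eventually (eventually_le_nhds hε)] with y hy
      rw [norm_smul, Real.norm_eq_abs, abs_of_nonneg (Real.rpow_nonneg (norm_nonneg y) _)]
      exact mul_le_mul_of_nonneg_right hy (norm_nonneg y)
  · -- x ≠ 0
    have hg := grad_norm_rpow (p := r - 2) x (Or.inl hx)
    have hmain := hg.smul (hasFDerivAt_id x)
    convert hmain using 1
    · rfl
    · rfl
    · rfl
    · rfl
    · rfl
    rw [add_comm, show r - 2 - 2 = r - 4 by ring]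
    congr 1
    ext y
    simp only [ContinuousLinearMap.smul_apply, ContinuousLinearMap.smulRight_apply,
      ContinuousLinearMap.coe_smul', Pi.smul_apply, innerSL_apply_apply, ContinuousLinearMap.id_apply,
      id_eq, smul_eq_mul]
    rw [smul_smul, mul_comm]

end HJBaux

namespace HJBaux

variable {d : ℕ}
local notation "E" => EuclideanSpace ℝ (Fin d)

theorem rpow_mul_le {s p q : ℝ} (hs : 0 ≤ s) (hpq : p + 1 = q) : s ^ p * s ≤ s ^ q := by
  rcases hs.eq_or_lt with rfl | hs'
  · rw [mul_zero]
    exact Real.rpow_nonneg le_rfl q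
  · rw [← hpq, Real.rpow_add hs', Real.rpow_one]

theorem rpow_mul_self_le {s p q : ℝ} (hs : 0 ≤ s) (hpq : p + 2 = q) : s ^ p * (s * s) ≤ s ^ q := by
  rcases hs.eq_or_lt with rfl | hs'
  · rw [mul_zero, mul_zero]
    exact Real.rpow_nonneg le_rfl q
  · rw [← hpq, Real.rpow_add hs']
    have : s ^ (2:ℝ) = s * s := by
      rw [show (2:ℝ) = ((2:ℕ):ℝ) by norm_num, Real.rpow_natCast, sq]
    rw [this]

theorem rpow_le_one_add {s p r : ℝ} (hs : 0 ≤ s) (hp : 0 ≤ p) (hpr : p ≤ r) :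
    s ^ p ≤ 1 + s ^ r := by
  rcases le_total s 1 with h1 | h1
  · have := Real.rpow_le_one hs h1 hp
    have := Real.rpow_nonneg hs r
    linarith
  · have := Real.rpow_le_rpow_of_exponent_le h1 hpr
    linarith

theorem cont_hess_field {r : ℝ} (hr : 2 ≤ r) :
    Continuous (fun x : E => ((r-2) * ‖x‖ ^ (r-4)) • ((innerSL ℝ x : E →L[ℝ] ℝ).smulRight x)) := by
  rcases eq_or_lt_of_le hr with hr2 | hr2
  · have h0 : r - 2 = 0 := by rw [← hr2]; ring
    simp only [h0, zero_mul, zero_smul]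
    exact continuous_const
  · have hBil : Continuous (fun y : E => (innerSL ℝ y : E →L[ℝ] ℝ).smulRight y) :=
      isBoundedBilinearMap_smulRight.continuous.comp ((innerSL ℝ).continuous.prodMk continuous_id)
    rw [continuous_iff_continuousAt]
    intro x
    rcases eq_or_ne x 0 with rfl | hx
    · have h0 : ((r-2) * ‖(0:E)‖ ^ (r-4)) • ((innerSL ℝ (0:E) : E →L[ℝ] ℝ).smulRight (0:E)) = 0 := by
        ext y; simp
      unfold ContinuousAt
      simp only []
      rw [h0]
      apply squeeze_zero_norm (a := fun y : E => (r-2) * ‖y‖ ^ (r-2))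
      · intro y
        rw [norm_smul ((r-2) * ‖y‖ ^ (r-4)) ((innerSL ℝ y : E →L[ℝ] ℝ).smulRight y),
          ContinuousLinearMap.norm_smulRight_apply, innerSL_apply_norm,
          Real.norm_eq_abs, abs_mul, abs_of_nonneg (by linarith : (0:ℝ) ≤ r - 2),
          abs_of_nonneg (Real.rpow_nonneg (norm_nonneg y) _), mul_assoc]
        exact mul_le_mul_of_nonneg_left
          (rpow_mul_self_le (norm_nonneg y) (by ring)) (by linarith)
      · have tcont : ContinuousAt (fun s : ℝ => s ^ (r-2)) 0 :=
          Real.continuousAt_rpow_const 0 (r-2) (Or.inr (by linarith))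
        have htd : Filter.Tendsto (fun y : E => ‖y‖ ^ (r-2)) (nhds 0) (nhds 0) := by
          have hn : Filter.Tendsto (fun y : E => ‖y‖) (nhds 0) (nhds 0) := by
            simpa using continuous_norm.tendsto (0:E)
          simpa [Real.zero_rpow (by linarith : r - 2 ≠ 0), Function.comp_def] using tcont.tendsto.comp hn
        simpa using (htd.const_mul (r-2))
    · refine ContinuousAt.fun_smul ?_ hBil.continuousAt
      exact continuousAt_const.mul
        ((Real.continuousAt_rpow_const ‖x‖ (r-4)
          (Or.inl (norm_ne_zero_iff.2 hx))).comp continuous_norm.continuousAt)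

end HJBaux


open HJBaux in
/-- **Existence of a smooth supersolution to the HJB equation (Remark 5.2).**
Under (HFC) and (HBC)(i)-(ii), with `r = max 2 h`, there are constants `C̄, ρ > 0` such
that `v̄(t,x) = C̄ e^{ρ(T-t)}(1 + |x|^r)` is a classical (smooth) supersolution: it
dominates `g` at time `T`, and
`-∂_t v̄ - sup_{a ∈ A} [ b(x,a)·D_x v̄ + ½ tr(σσᵀ(x,a) D_x² v̄) + f(x,a,v̄,σᵀ(x,a)D_x v̄) ] ≥ 0`
on `[0,T] × ℝ^d`.  The gradient `D_x v̄`, Hessian `D_x² v̄` (as a continuous linear map) and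
time derivative are exhibited explicitly via `HasGradientAt`, `HasFDerivAt`, `HasDerivAt`,
with jointly continuous derivatives. -/
theorem exists_smooth_supersolution_HJB (d q : ℕ) (T : ℝ) (hT : 0 < T)
    (A : Set (EuclideanSpace ℝ (Fin q))) (hA : IsCompact A)
    (b : EuclideanSpace ℝ (Fin d) → EuclideanSpace ℝ (Fin q) → EuclideanSpace ℝ (Fin d))
    (σ : EuclideanSpace ℝ (Fin d) → EuclideanSpace ℝ (Fin q) →
      (EuclideanSpace ℝ (Fin d) →L[ℝ] EuclideanSpace ℝ (Fin d)))
    (g : EuclideanSpace ℝ (Fin d) → ℝ)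
    (f : EuclideanSpace ℝ (Fin d) → EuclideanSpace ℝ (Fin q) → ℝ →
      EuclideanSpace ℝ (Fin d) → ℝ)
    (C : ℝ)
    (hFC : ∀ x x' a a', ‖b x a - b x' a'‖ + ‖σ x a - σ x' a'‖ ≤ C * (‖x - x'‖ + ‖a - a'‖))
    (hg : Continuous g)
    (hf : Continuous fun p : EuclideanSpace ℝ (Fin d) × EuclideanSpace ℝ (Fin q) × ℝ ×
      EuclideanSpace ℝ (Fin d) => f p.1 p.2.1 p.2.2.1 p.2.2.2)
    (c h : ℝ) (hc : 0 ≤ c) (hh : 0 ≤ h)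
    (hfgrowth : ∀ x a, |f x a 0 0| ≤ c * (1 + ‖x‖ ^ h + ‖a‖ ^ h))
    (hggrowth : ∀ x, |g x| ≤ c * (1 + ‖x‖ ^ h))
    (hfLip : ∀ x a y y' z z', |f x a y z - f x a y' z'| ≤ C * (|y - y'| + ‖z - z'‖)) :
    ∃ Cb ρ : ℝ, 0 < Cb ∧ 0 < ρ ∧
      ∃ (vt : ℝ → EuclideanSpace ℝ (Fin d) → ℝ)
        (Dv : ℝ → EuclideanSpace ℝ (Fin d) → EuclideanSpace ℝ (Fin d))
        (D2v : ℝ → EuclideanSpace ℝ (Fin d) →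
          (EuclideanSpace ℝ (Fin d) →L[ℝ] EuclideanSpace ℝ (Fin d))),
        (∀ t x, HasDerivAt (fun s => vbar d T Cb ρ (max 2 h) s x) (vt t x) t) ∧
        (∀ t x, HasGradientAt (fun y => vbar d T Cb ρ (max 2 h) t y) (Dv t x) x) ∧
        (∀ t x, HasFDerivAt (fun y => Dv t y) (D2v t x) x) ∧
        Continuous (fun p : ℝ × EuclideanSpace ℝ (Fin d) => vt p.1 p.2) ∧
        Continuous (fun p : ℝ × EuclideanSpace ℝ (Fin d) => Dv p.1 p.2) ∧
        Continuous (fun p : ℝ × EuclideanSpace ℝ (Fin d) => D2v p.1 p.2) ∧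
        (∀ x, g x ≤ vbar d T Cb ρ (max 2 h) T x) ∧
        (∀ t ∈ Icc (0 : ℝ) T, ∀ x,
          0 ≤ -(vt t x) - ⨆ a ∈ A,
            ((inner ℝ (b x a) (Dv t x) : ℝ)
              + (1 / 2) * LinearMap.trace ℝ (EuclideanSpace ℝ (Fin d))
                  ((σ x a ∘L ContinuousLinearMap.adjoint (σ x a) ∘L D2v t x) :
                    EuclideanSpace ℝ (Fin d) →ₗ[ℝ] EuclideanSpace ℝ (Fin d))
              + f x a (vbar d T Cb ρ (max 2 h) t x)
                  (ContinuousLinearMap.adjoint (σ x a) (Dv t x)))) := by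
  set r : ℝ := max 2 h with hrdef
  have hr2 : (2:ℝ) ≤ r := le_max_left _ _
  have hhr : h ≤ r := le_max_right _ _
  have hr0 : (0:ℝ) < r := by linarith
  obtain ⟨M0, hM0⟩ := (Bornology.IsBounded.exists_pos_norm_le hA.isBounded)
  set M : ℝ := max M0 0 with hMdef
  have hM : 0 ≤ M := le_max_right _ _
  have hMA : ∀ a ∈ A, ‖a‖ ≤ M := fun a ha => (hM0.2 a ha).trans (le_max_left _ _)
  have hC : 0 ≤ C := by
    have h1 := hfLip 0 0 1 0 0 0
    simp only [sub_zero, abs_one, norm_zero, add_zero, mul_one] at h1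
    exact le_trans (abs_nonneg _) h1
  set K : ℝ := ‖b 0 0‖ + ‖σ 0 0‖ + C * M + C with hKdef
  have hK : 0 ≤ K := by positivity
  have hbσ : ∀ x' a', a' ∈ A → ‖b x' a'‖ + ‖σ x' a'‖ ≤ K * (1 + ‖x'‖) := by
    intro x' a' ha'
    have h1 := hFC x' 0 a' 0
    simp only [sub_zero] at h1
    have h2 : ‖b x' a'‖ - ‖b 0 0‖ ≤ ‖b x' a' - b 0 0‖ := norm_sub_norm_le _ _
    have h3 : ‖σ x' a'‖ - ‖σ 0 0‖ ≤ ‖σ x' a' - σ 0 0‖ := norm_sub_norm_le _ _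
    have h4 : C * (‖x'‖ + ‖a'‖) ≤ C * (‖x'‖ + M) :=
      mul_le_mul_of_nonneg_left (by linarith [hMA a' ha']) hC
    have h5 : 0 ≤ C * ‖x'‖ := by positivity
    have h6 : 0 ≤ (‖b 0 0‖ + ‖σ 0 0‖ + C * M) * ‖x'‖ := by positivity
    rw [hKdef]
    nlinarith [norm_nonneg x']
  set Cb : ℝ := c * (2 + M ^ h) + 2 * c + 1 with hCbdef
  set ρ : ℝ := 2*K*r + 2*(d:ℝ)*K^2*r*(r-1) + 1 + C*(1+2*K*r) + 1 with hρdef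
  have hMh : 0 ≤ M ^ h := Real.rpow_nonneg hM h
  have hCb : 0 < Cb := by nlinarith
  have hρ : 0 < ρ := by
    have t1 : 0 ≤ 2*K*r := by positivity
    have t2 : 0 ≤ 2*(d:ℝ)*K^2*r*(r-1) := by
      have : (0:ℝ) ≤ r - 1 := by linarith
      positivity
    have t3 : 0 ≤ C*(1+2*K*r) := by positivity
    rw [hρdef]; linarith
  refine ⟨Cb, ρ, hCb, hρ,
    (fun t x => (-ρ) * (Cb * Real.exp (ρ*(T-t)) * (1 + ‖x‖ ^ r))),
    (fun t x => (Cb * Real.exp (ρ*(T-t)) * (r * ‖x‖ ^ (r-2))) • x),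
    (fun t x => (Cb * Real.exp (ρ*(T-t)) * r) •
      (((r-2) * ‖x‖ ^ (r-4)) • (innerSL ℝ x : EuclideanSpace ℝ (Fin d) →L[ℝ] ℝ).smulRight x
        + ‖x‖ ^ (r-2) • ContinuousLinearMap.id ℝ (EuclideanSpace ℝ (Fin d)))),
    ?_, ?_, ?_, ?_, ?_, ?_, ?_, ?_⟩
  · -- time derivative
    intro t x
    have h1 : HasDerivAt (fun s : ℝ => ρ * (T - s)) (ρ * (0 - 1)) t :=
      ((hasDerivAt_const t T).sub (hasDerivAt_id t)).const_mul ρ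
    have h2 := (h1.exp.const_mul Cb).mul_const (1 + ‖x‖ ^ r)
    unfold vbar
    convert h2 using 1
    · rfl
    · rfl
    ring
  · -- gradient
    intro t x
    rw [hasGradientAt_iff_hasFDerivAt]
    have h1 := ((grad_norm_rpow (p := r) x (Or.inr hr2)).const_add 1).const_mul
      (Cb * Real.exp (ρ*(T-t)))
    unfold vbar
    convert h1 using 1
    · rfl
    ext y
    simp only [InnerProductSpace.toDual_apply_apply, ContinuousLinearMap.smul_apply, innerSL_apply_apply,
      smul_eq_mul, real_inner_smul_left]
    ring
  · -- Hessian
    intro t x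
    have h1 := (hess_norm_rpow hr2 x).const_smul (Cb * Real.exp (ρ*(T-t)) * r)
    convert h1 using 2 with y
    · rfl
    · rfl
    · rfl
    · rfl
    · rfl
    · rfl
    simp only [Pi.smul_apply]
    rw [smul_smul]
    ring_nf
  · -- continuity of vt
    exact continuous_const.mul
      (((continuous_const.mul (Real.continuous_exp.comp
          (continuous_const.mul (continuous_const.sub continuous_id)))).comp continuous_fst).mul
        ((continuous_const.add (continuous_norm.rpow_const
          (fun _ => Or.inr (by linarith)))).comp continuous_snd))
  · -- continuity of Dv
    exact (((continuous_const.mul (Real.continuous_exp.comp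
          (continuous_const.mul (continuous_const.sub continuous_id)))).comp continuous_fst).mul
        ((continuous_const.mul (continuous_norm.rpow_const
          (fun _ => Or.inr (by linarith)))).comp continuous_snd)).smul continuous_snd
  · -- continuity of D2v
    exact ((((continuous_const.mul (Real.continuous_exp.comp
          (continuous_const.mul (continuous_const.sub continuous_id)))).mul
            continuous_const).comp continuous_fst)).smul
      (((cont_hess_field hr2).comp continuous_snd).add
        (((continuous_norm.rpow_const (fun _ => Or.inr (by linarith))).comp
            continuous_snd).smul continuous_const))
  · -- terminal condition
    intro x
    have hgx := hggrowth x
    have h1 : ‖x‖ ^ h ≤ 1 + ‖x‖ ^ r := rpow_le_one_add (norm_nonneg x) hh hhr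
    have h2 : (0:ℝ) ≤ ‖x‖ ^ r := Real.rpow_nonneg (norm_nonneg x) r
    have habs : g x ≤ |g x| := le_abs_self _
    show g x ≤ Cb * Real.exp (ρ * (T - T)) * (1 + ‖x‖ ^ r)
    rw [sub_self, mul_zero, Real.exp_zero, mul_one]
    have h3 : c * (1 + ‖x‖ ^ h) ≤ c * (2 + ‖x‖ ^ r) :=
      mul_le_mul_of_nonneg_left (by linarith) hc
    have hCb2 : 2 * c ≤ Cb := by
      rw [hCbdef]
      nlinarith [mul_nonneg hc hMh]
    have h4 : c * (2 + ‖x‖ ^ r) ≤ Cb * (1 + ‖x‖ ^ r) := by nlinarith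
    linarith
  · -- the supersolution inequality
    intro t ht x
    obtain ⟨ht0, htT⟩ := ht
    beta_reduce
    have hs : (0:ℝ) ≤ ‖x‖ := norm_nonneg x
    set s : ℝ := ‖x‖ with hsdef
    set Et : ℝ := Cb * Real.exp (ρ * (T - t)) with hEtdef
    have hexp1 : 1 ≤ Real.exp (ρ * (T - t)) :=
      Real.one_le_exp (mul_nonneg hρ.le (by linarith))
    have hEt1 : Cb ≤ Et := by rw [hEtdef]; nlinarith
    have hEt : 0 < Et := lt_of_lt_of_le hCb hEt1
    have hsr : (0:ℝ) ≤ s ^ r := Real.rpow_nonneg hs r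
    set P : ℝ := 1 + s ^ r with hPdef
    have hP1 : (1:ℝ) ≤ P := by rw [hPdef]; linarith
    have hP0 : (0:ℝ) < P := by linarith
    have hs2 : (0:ℝ) ≤ s ^ (r-2) := Real.rpow_nonneg hs _
    have hs1 : (0:ℝ) ≤ s ^ (r-1) := Real.rpow_nonneg hs _
    have hu : s ^ (r-2) * s ≤ s ^ (r-1) := rpow_mul_le hs (by ring)
    have hu2 : s ^ (r-1) ≤ P := by
      rw [hPdef]; exact rpow_le_one_add hs (by linarith) (by linarith)
    have hsu : s ^ (r-1) * s ≤ s ^ r := rpow_mul_le hs (by ring)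
    have hs2P : s ^ (r-2) ≤ P := by
      rw [hPdef]; exact rpow_le_one_add hs (by linarith) (by linarith)
    have hsrP : s ^ r ≤ P := by rw [hPdef]; linarith
    have hEtP : (0:ℝ) ≤ Et * P := mul_nonneg hEt.le hP0.le
    have hV : vbar d T Cb ρ r t x = Et * P := by
      rw [hEtdef, hPdef, hsdef]; rfl
    have hDvnorm : ‖(Et * (r * s ^ (r-2))) • x‖ = Et * r * (s ^ (r-2) * s) := by
      rw [norm_smul, Real.norm_eq_abs,
        abs_of_nonneg (mul_nonneg hEt.le (mul_nonneg hr0.le hs2)), ← hsdef]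
      ring
    have h1s : (1+s) * (s^(r-2) * s) ≤ 2 * P := by
      have e1 : s * (s^(r-2) * s) ≤ s * s^(r-1) := mul_le_mul_of_nonneg_left hu hs
      have e2 : s * s^(r-1) ≤ s^r := by rw [mul_comm]; exact hsu
      nlinarith
    have hcommon : (K*(1+s)) * (Et * r * (s^(r-2)*s)) ≤ 2*K*r*(Et*P) := by
      calc (K*(1+s)) * (Et * r * (s^(r-2)*s))
          = (K*(Et*r)) * ((1+s)*(s^(r-2)*s)) := by ring
        _ ≤ (K*(Et*r)) * (2*P) :=
            mul_le_mul_of_nonneg_left h1s (mul_nonneg hK (mul_nonneg hEt.le hr0.le))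
        _ = 2*K*r*(Et*P) := by ring
    have hfour : (1+s)*((1+s)*s^(r-2)) ≤ 4*P := by
      have e1 : s * s^(r-2) ≤ s^(r-1) := by rw [mul_comm]; exact hu
      have e2 : s * (s * s^(r-2)) ≤ s * s^(r-1) := mul_le_mul_of_nonneg_left e1 hs
      have e3 : s * s^(r-1) ≤ s^r := by rw [mul_comm]; exact hsu
      nlinarith
    have hshP : s ^ h ≤ P := by
      rw [hPdef]; exact rpow_le_one_add hs hh hhr
    have hgrow : c*(1+s^h+M^h) ≤ Et*P := by
      have k1 : 0 ≤ M^h*(P-1) := mul_nonneg hMh (by linarith)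
      have e1' : (1+s^h+M^h) ≤ (2+M^h)*P := by linarith only [hshP, hP1, k1]
      have e1 : c*(1+s^h+M^h) ≤ c*((2+M^h)*P) := mul_le_mul_of_nonneg_left e1' hc
      have e2 : c*(2+M^h) ≤ Cb := by rw [hCbdef]; linarith
      have e3 : c*(2+M^h)*P ≤ Cb*P := mul_le_mul_of_nonneg_right e2 hP0.le
      have e4 : Cb*P ≤ Et*P := mul_le_mul_of_nonneg_right hEt1 hP0.le
      linarith only [e1, e3, e4]
    have hsup : ∀ a ∈ A,
        ((inner ℝ (b x a) ((Et * (r * s ^ (r-2))) • x) : ℝ)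
          + (1 / 2) * LinearMap.trace ℝ (EuclideanSpace ℝ (Fin d))
              ((σ x a ∘L ContinuousLinearMap.adjoint (σ x a) ∘L ((Et * r) •
                (((r-2) * s ^ (r-4)) • (innerSL ℝ x :
                    EuclideanSpace ℝ (Fin d) →L[ℝ] ℝ).smulRight x
                  + s ^ (r-2) • ContinuousLinearMap.id ℝ (EuclideanSpace ℝ (Fin d))))) :
                EuclideanSpace ℝ (Fin d) →ₗ[ℝ] EuclideanSpace ℝ (Fin d))
          + f x a (vbar d T Cb ρ r t x)
              (ContinuousLinearMap.adjoint (σ x a) ((Et * (r * s ^ (r-2))) • x)))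
          ≤ ρ * (Et * P) := by
      intro a ha
      have hba : ‖b x a‖ ≤ K * (1+s) := by
        have h' := hbσ x a ha; rw [← hsdef] at h'
        linarith only [h', norm_nonneg (σ x a)]
      have hσa : ‖σ x a‖ ≤ K * (1+s) := by
        have h' := hbσ x a ha; rw [← hsdef] at h'
        linarith only [h', norm_nonneg (b x a)]
      -- Term 1 : the drift term
      have hT1 : (inner ℝ (b x a) ((Et * (r * s ^ (r-2))) • x) : ℝ) ≤ 2*K*r*(Et*P) := by
        calc (inner ℝ (b x a) ((Et * (r * s ^ (r-2))) • x) : ℝ)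
            ≤ ‖b x a‖ * ‖(Et * (r * s ^ (r-2))) • x‖ := real_inner_le_norm _ _
          _ = ‖b x a‖ * (Et * r * (s^(r-2)*s)) := by rw [hDvnorm]
          _ ≤ (K*(1+s)) * (Et * r * (s^(r-2)*s)) := by
              refine mul_le_mul_of_nonneg_right hba ?_
              exact mul_nonneg (mul_nonneg hEt.le hr0.le) (mul_nonneg hs2 hs)
          _ ≤ 2*K*r*(Et*P) := hcommon
      -- Term 2 : the trace term
      have hD2 : ‖(Et * r) • (((r-2) * s ^ (r-4)) • (innerSL ℝ x :
            EuclideanSpace ℝ (Fin d) →L[ℝ] ℝ).smulRight x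
          + s ^ (r-2) • ContinuousLinearMap.id ℝ (EuclideanSpace ℝ (Fin d)))‖
          ≤ Et * r * ((r-1) * s^(r-2)) := by
        rw [norm_smul (Et * r) (((r-2) * s ^ (r-4)) • (innerSL ℝ x :
              EuclideanSpace ℝ (Fin d) →L[ℝ] ℝ).smulRight x
            + s ^ (r-2) • ContinuousLinearMap.id ℝ (EuclideanSpace ℝ (Fin d))),
          Real.norm_eq_abs, abs_of_nonneg (mul_nonneg hEt.le hr0.le)]
        refine mul_le_mul_of_nonneg_left ((norm_add_le _ _).trans ?_)
          (mul_nonneg hEt.le hr0.le)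
        have hA : ‖((r-2) * s ^ (r-4)) • (innerSL ℝ x :
            EuclideanSpace ℝ (Fin d) →L[ℝ] ℝ).smulRight x‖ ≤ (r-2) * s^(r-2) := by
          rw [norm_smul ((r-2) * s ^ (r-4)) ((innerSL ℝ x :
              EuclideanSpace ℝ (Fin d) →L[ℝ] ℝ).smulRight x),
            ContinuousLinearMap.norm_smulRight_apply, innerSL_apply_norm, ← hsdef,
            Real.norm_eq_abs,
            abs_of_nonneg (mul_nonneg (by linarith) (Real.rpow_nonneg hs _)), mul_assoc]
          exact mul_le_mul_of_nonneg_left (rpow_mul_self_le hs (by ring)) (by linarith)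
        have hB : ‖s ^ (r-2) • ContinuousLinearMap.id ℝ (EuclideanSpace ℝ (Fin d))‖
            ≤ s^(r-2) := by
          rw [norm_smul (s ^ (r-2)) (ContinuousLinearMap.id ℝ (EuclideanSpace ℝ (Fin d))),
            Real.norm_eq_abs, abs_of_nonneg hs2]
          calc s^(r-2) * ‖ContinuousLinearMap.id ℝ (EuclideanSpace ℝ (Fin d))‖
              ≤ s^(r-2) * 1 :=
                mul_le_mul_of_nonneg_left ContinuousLinearMap.norm_id_le hs2
            _ = s^(r-2) := mul_one _
        linarith only [hA, hB]
      have htr := trace_abs_le (σ x a ∘L ContinuousLinearMap.adjoint (σ x a) ∘L ((Et * r) •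
        (((r-2) * s ^ (r-4)) • (innerSL ℝ x :
            EuclideanSpace ℝ (Fin d) →L[ℝ] ℝ).smulRight x
          + s ^ (r-2) • ContinuousLinearMap.id ℝ (EuclideanSpace ℝ (Fin d)))))
      have hadj : ‖ContinuousLinearMap.adjoint (σ x a)‖ = ‖σ x a‖ :=
        LinearIsometryEquiv.norm_map ContinuousLinearMap.adjoint (σ x a)
      have hcomple : ‖σ x a ∘L ContinuousLinearMap.adjoint (σ x a) ∘L ((Et * r) •
          (((r-2) * s ^ (r-4)) • (innerSL ℝ x :
              EuclideanSpace ℝ (Fin d) →L[ℝ] ℝ).smulRight x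
            + s ^ (r-2) • ContinuousLinearMap.id ℝ (EuclideanSpace ℝ (Fin d))))‖
          ≤ (K*(1+s)) * ((K*(1+s)) * (Et * r * ((r-1) * s^(r-2)))) := by
        refine (ContinuousLinearMap.opNorm_comp_le _ _).trans ?_
        have hKs : (0:ℝ) ≤ K * (1+s) := by positivity
        refine mul_le_mul hσa ?_ (norm_nonneg _) hKs
        refine (ContinuousLinearMap.opNorm_comp_le _ _).trans ?_
        rw [hadj]
        exact mul_le_mul hσa hD2 (norm_nonneg _) hKs
      have hm4 : (K*(1+s)) * ((K*(1+s)) * (Et * r * ((r-1) * s^(r-2))))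
          ≤ K^2*(Et*(r*(r-1))) * (4*P) := by
        have hc0 : (0:ℝ) ≤ K^2*(Et*(r*(r-1))) :=
          mul_nonneg (sq_nonneg K) (mul_nonneg hEt.le (mul_nonneg hr0.le (by linarith)))
        calc (K*(1+s)) * ((K*(1+s)) * (Et * r * ((r-1) * s^(r-2))))
            = K^2*(Et*(r*(r-1))) * ((1+s)*((1+s)*s^(r-2))) := by ring
          _ ≤ K^2*(Et*(r*(r-1))) * (4*P) := mul_le_mul_of_nonneg_left hfour hc0
      have hT2 : (1 / 2 : ℝ) * LinearMap.trace ℝ (EuclideanSpace ℝ (Fin d))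
          ((σ x a ∘L ContinuousLinearMap.adjoint (σ x a) ∘L ((Et * r) •
            (((r-2) * s ^ (r-4)) • (innerSL ℝ x :
                EuclideanSpace ℝ (Fin d) →L[ℝ] ℝ).smulRight x
              + s ^ (r-2) • ContinuousLinearMap.id ℝ (EuclideanSpace ℝ (Fin d))))) :
            EuclideanSpace ℝ (Fin d) →ₗ[ℝ] EuclideanSpace ℝ (Fin d))
          ≤ 2*(d:ℝ)*K^2*r*(r-1)*(Et*P) := by
        have habs' := le_abs_self (LinearMap.trace ℝ (EuclideanSpace ℝ (Fin d))
          ((σ x a ∘L ContinuousLinearMap.adjoint (σ x a) ∘L ((Et * r) •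
            (((r-2) * s ^ (r-4)) • (innerSL ℝ x :
                EuclideanSpace ℝ (Fin d) →L[ℝ] ℝ).smulRight x
              + s ^ (r-2) • ContinuousLinearMap.id ℝ (EuclideanSpace ℝ (Fin d))))) :
            EuclideanSpace ℝ (Fin d) →ₗ[ℝ] EuclideanSpace ℝ (Fin d)))
        have hd2 : ((d:ℝ)) * ‖σ x a ∘L ContinuousLinearMap.adjoint (σ x a) ∘L ((Et * r) •
            (((r-2) * s ^ (r-4)) • (innerSL ℝ x :
                EuclideanSpace ℝ (Fin d) →L[ℝ] ℝ).smulRight x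
              + s ^ (r-2) • ContinuousLinearMap.id ℝ (EuclideanSpace ℝ (Fin d))))‖
            ≤ (d:ℝ) * (K^2*(Et*(r*(r-1))) * (4*P)) :=
          mul_le_mul_of_nonneg_left (hcomple.trans hm4) (Nat.cast_nonneg d)
        have chain := le_trans habs' (le_trans htr hd2)
        rw [show (2:ℝ)*(d:ℝ)*K^2*r*(r-1)*(Et*P)
            = (1/2) * ((d:ℝ) * (K^2*(Et*(r*(r-1))) * (4*P))) by ring]
        exact mul_le_mul_of_nonneg_left chain (by norm_num)
      -- Term 3 : the f term
      have hZ : ‖ContinuousLinearMap.adjoint (σ x a) ((Et * (r * s ^ (r-2))) • x)‖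
          ≤ 2*K*r*(Et*P) := by
        calc ‖ContinuousLinearMap.adjoint (σ x a) ((Et * (r * s ^ (r-2))) • x)‖
            ≤ ‖ContinuousLinearMap.adjoint (σ x a)‖ * ‖(Et * (r * s ^ (r-2))) • x‖ :=
              ContinuousLinearMap.le_opNorm _ _
          _ = ‖σ x a‖ * (Et * r * (s^(r-2)*s)) := by rw [hadj, hDvnorm]
          _ ≤ (K*(1+s)) * (Et * r * (s^(r-2)*s)) := by
              refine mul_le_mul_of_nonneg_right hσa ?_
              exact mul_nonneg (mul_nonneg hEt.le hr0.le) (mul_nonneg hs2 hs)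
          _ ≤ 2*K*r*(Et*P) := hcommon
      have hlips := hfLip x a (Et * P) 0
        (ContinuousLinearMap.adjoint (σ x a) ((Et * (r * s ^ (r-2))) • x)) 0
      simp only [sub_zero] at hlips
      have hf00 := hfgrowth x a
      have hah : ‖a‖ ^ h ≤ M ^ h := Real.rpow_le_rpow (norm_nonneg a) (hMA a ha) hh
      have hT3 : f x a (vbar d T Cb ρ r t x)
          (ContinuousLinearMap.adjoint (σ x a) ((Et * (r * s ^ (r-2))) • x))
          ≤ Et*P + C*(Et*P + 2*K*r*(Et*P)) := by
        rw [hV]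
        have habsEtP : |Et * P| = Et * P := abs_of_nonneg hEtP
        have h1 : f x a (Et*P) (ContinuousLinearMap.adjoint (σ x a)
            ((Et * (r * s ^ (r-2))) • x)) - f x a 0 0
            ≤ C * (Et*P + ‖ContinuousLinearMap.adjoint (σ x a)
              ((Et * (r * s ^ (r-2))) • x)‖) := by
          calc _ ≤ |f x a (Et*P) (ContinuousLinearMap.adjoint (σ x a)
                ((Et * (r * s ^ (r-2))) • x)) - f x a 0 0| := le_abs_self _
            _ ≤ C * (|Et*P| + ‖ContinuousLinearMap.adjoint (σ x a)
                ((Et * (r * s ^ (r-2))) • x)‖) := hlips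
            _ = _ := by rw [habsEtP]
        have h2 : f x a 0 0 ≤ c*(1+s^h+‖a‖^h) := le_trans (le_abs_self _) (by
          rw [← hsdef] at hf00; exact hf00)
        have h3 : c*(1+s^h+‖a‖^h) ≤ c*(1+s^h+M^h) :=
          mul_le_mul_of_nonneg_left (by linarith only [hah]) hc
        have h4 : C * (Et*P + ‖ContinuousLinearMap.adjoint (σ x a)
            ((Et * (r * s ^ (r-2))) • x)‖) ≤ C*(Et*P + 2*K*r*(Et*P)) :=
          mul_le_mul_of_nonneg_left (by linarith only [hZ]) hC
        linarith only [h1, h2, h3, h4, hgrow]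
      -- put everything together
      have total := add_le_add (add_le_add hT1 hT2) hT3
      refine le_trans total ?_
      rw [hρdef]
      linarith only [hEtP]
    have hfin : (⨆ a ∈ A,
        ((inner ℝ (b x a) ((Et * (r * s ^ (r-2))) • x) : ℝ)
          + (1 / 2) * LinearMap.trace ℝ (EuclideanSpace ℝ (Fin d))
              ((σ x a ∘L ContinuousLinearMap.adjoint (σ x a) ∘L ((Et * r) •
                (((r-2) * s ^ (r-4)) • (innerSL ℝ x :
                    EuclideanSpace ℝ (Fin d) →L[ℝ] ℝ).smulRight x
                  + s ^ (r-2) • ContinuousLinearMap.id ℝ (EuclideanSpace ℝ (Fin d))))) :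
                EuclideanSpace ℝ (Fin d) →ₗ[ℝ] EuclideanSpace ℝ (Fin d))
          + f x a (vbar d T Cb ρ r t x)
              (ContinuousLinearMap.adjoint (σ x a) ((Et * (r * s ^ (r-2))) • x))))
        ≤ ρ * (Et * P) := by
      refine Real.iSup_le (fun a => Real.iSup_le (fun ha => hsup a ha) ?_) ?_
      · exact mul_nonneg hρ.le hEtP
      · exact mul_nonneg hρ.le hEtP
    linarith [hfin]
end

section
/- Let K : [0,T] → ℝ be nondecreasing and right-continuous, and write ΔK_t := K(t) − K(t⁻) for t ∈ (0,T] (left limits exist by monotonicity). Then for every ε > 0 and δ > 0 there exist finitely many points 0 ≤ σ_0 ≤ τ_0 ≤ σ_1 ≤ τ_1 ≤ ⋯ ≤ σ_N ≤ τ_N ≤ T such that the intervals (σ_k, τ_k], k = 0, …, N, are pairwise disjoint, ∑_{k=0}^N (τ_k − σ_k) ≥ T − ε, and ∑_{k=0}^N ∑_{t ∈ (σ_k, τ_k]} (ΔK_t)² ≤ δ. -/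
open Set

lemma telescope_aux (n : ℕ) (σ τ : Fin (n + 1) → ℝ) :
    ∑ k, (τ k - σ k) =
      τ (Fin.last n) - σ 0 - ∑ k : Fin n, (σ k.succ - τ k.castSucc) := by
  rw [Finset.sum_sub_distrib, Finset.sum_sub_distrib, Fin.sum_univ_castSucc (f := τ),
    Fin.sum_univ_succ (f := σ)]
  ring


lemma jump_sum_le (T : ℝ) (hT : 0 < T) (K : ℝ → ℝ)
    (hmono : Monotone K) (hrc : ∀ t : ℝ, ContinuousWithinAt K (Ici t) t)
    (u : Finset ℝ) :
    ∑ t ∈ u, (Ioc 0 T).indicator (fun t => K t - Function.leftLim K t) t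
      ≤ K T - K 0 := by
  classical
  set J : ℝ → ℝ := fun t => K t - Function.leftLim K t with hJdef
  set S : StieltjesFunction ℝ := ⟨K, hmono, hrc⟩ with hSdef
  set v := u.filter (· ∈ Ioc 0 T) with hv
  have hvm : ∀ t ∈ v, t ∈ Ioc 0 T := fun t ht => (Finset.mem_filter.1 ht).2
  have h1 : ∑ t ∈ u, (Ioc 0 T).indicator J t = ∑ t ∈ v, J t := by
    rw [hv, Finset.sum_indicator_eq_sum_filter]
  rw [h1]
  have hJ0 : ∀ t, 0 ≤ J t := fun t => sub_nonneg.2 (hmono.leftLim_le le_rfl)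
  have hM0 : (0:ℝ) ≤ K T - K 0 := sub_nonneg.2 (hmono hT.le)
  rw [← ENNReal.ofReal_le_ofReal_iff hM0]
  have h2 : ENNReal.ofReal (∑ t ∈ v, J t) = ∑ t ∈ v, S.measure {t} := by
    rw [ENNReal.ofReal_sum_of_nonneg (fun t _ => hJ0 t)]
    refine Finset.sum_congr rfl fun t _ => ?_
    rw [StieltjesFunction.measure_singleton]
  have h3 : ∑ t ∈ v, S.measure {t} = S.measure (⋃ t ∈ v, {t}) := by
    rw [MeasureTheory.measure_biUnion_finset]
    · exact fun a _ b _ hab => by simpa [Set.disjoint_singleton] using hab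
    · exact fun b _ => measurableSet_singleton b
  have h4 : S.measure (⋃ t ∈ v, {t}) ≤ S.measure (Ioc 0 T) := by
    apply MeasureTheory.measure_mono
    intro x hx
    simp only [Set.mem_iUnion, Set.mem_singleton_iff] at hx
    obtain ⟨t, ht, rfl⟩ := hx
    exact hvm _ ht
  rw [h2, h3]
  have h5 : S.measure (Ioc 0 T) = ENNReal.ofReal (K T - K 0) := S.measure_Ioc 0 T
  rw [← h5]
  exact h4

lemma construction_aux (T : ℝ) (hT : 0 < T) (K : ℝ → ℝ) (g : ℝ → ℝ)
    (hg0 : ∀ t, 0 ≤ g t)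
    (hsumg : Summable ((Ioc 0 T).indicator g))
    (ε δ : ℝ) (hε : 0 < ε) (hδ : 0 < δ)
    (F : Finset ℝ)
    (hD : ∑' x, (Ioc 0 T \ ↑F).indicator g x ≤ δ)
    (hsumD : Summable ((Ioc 0 T \ ↑F).indicator g)) :
    ∃ (N : ℕ) (σ τ : Fin (N + 1) → ℝ),
      0 ≤ σ 0 ∧ (∀ k, σ k ≤ τ k) ∧ τ (Fin.last N) ≤ T ∧
      (∀ k : Fin N, τ k.castSucc ≤ σ k.succ) ∧
      (∀ k l, k ≠ l → Disjoint (Ioc (σ k) (τ k)) (Ioc (σ l) (τ l))) ∧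
      T - ε ≤ ∑ k, (τ k - σ k) ∧
      ∑ k, (∑' t : Ioc (σ k) (τ k), g ↑t) ≤ δ := by
  classical
  set D : Set ℝ := Ioc 0 T \ ↑F with hDdef
  set Fl := F.filter (fun x => x ∈ Ioc 0 T) with hFl
  set l := Fl.sort (· ≤ ·) with hldef
  set m := l.length with hm
  set η := ε / (m + 1) with hηdef
  have hη0 : 0 < η := div_pos hε (by positivity)
  have hmem_l : ∀ x ∈ l, x ∈ Ioc 0 T := by
    intro x hx
    have := Finset.mem_sort (· ≤ ·) |>.1 hx
    exact (Finset.mem_filter.1 this).2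
  have hsorted : l.Pairwise (· < ·) := (Finset.sortedLT_sort Fl).pairwise
  set s : ℕ → ℝ := fun k =>
    if k = 0 then 0 else if h : k - 1 < m then l.get ⟨k - 1, h⟩ else T with hsdef
  have hs0 : s 0 = 0 := by simp [hsdef]
  have hsget : ∀ j (hj : j < m), s (j + 1) = l.get ⟨j, hj⟩ := by
    intro j hj; simp [hsdef, hj]
  have hsTop : ∀ k, m + 1 ≤ k → s k = T := by
    intro k hk
    have hk0 : k ≠ 0 := by omega
    have hk1 : ¬ (k - 1 < m) := by omega
    simp [hsdef, hk0, hk1]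
  have hsbound : ∀ k, 0 ≤ s k ∧ s k ≤ T := by
    intro k
    rcases Nat.eq_zero_or_pos k with rfl | hk
    · simp [hs0, hT.le]
    · rcases lt_or_ge (k - 1) m with h | h
      · obtain ⟨k', rfl⟩ : ∃ k', k = k' + 1 := ⟨k - 1, by omega⟩
        rw [hsget k' (by omega)]
        have hx := hmem_l _ (List.get_mem l ⟨k', h⟩)
        exact ⟨hx.1.le, hx.2⟩
      · rw [hsTop k (by omega)]
        exact ⟨hT.le, le_rfl⟩
  have hstrict : ∀ k, k + 1 ≤ m → s k < s (k + 1) := by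
    intro k hk
    rcases Nat.eq_zero_or_pos k with rfl | hkpos
    · rw [hs0, hsget 0 (by omega)]
      exact (hmem_l _ (List.get_mem l ⟨0, by omega⟩)).1
    · have h1 : k - 1 < m := by omega
      have h2 : k < m := by omega
      have hk' : k = (k - 1) + 1 := by omega
      rw [hk', hsget _ h1, ← hk', hsget _ h2]
      exact hsorted.rel_get_of_lt (by simp [Fin.lt_def]; omega)
  have hsmono : Monotone s := by
    apply monotone_nat_of_le_succ
    intro k
    rcases lt_or_ge (k + 1) (m + 1) with h | h
    · exact (hstrict k (by omega)).le
    · rw [hsTop (k + 1) (by omega)]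
      exact (hsbound k).2
  -- definitions
  set σ : Fin (m + 1) → ℝ := fun k => s k with hσdef
  set τ : Fin (m + 1) → ℝ := fun k => max (s (↑k + 1) - η) (s k) with hτdef
  have hτle : ∀ k : Fin (m + 1), τ k ≤ s (↑k + 1) := by
    intro k
    exact max_le (by linarith) (hsmono (Nat.le_succ _))
  have hτT : ∀ k : Fin (m + 1), τ k ≤ T := by
    intro k
    exact (hτle k).trans (hsbound _).2
  have hdisj : ∀ k l' : Fin (m + 1), k ≠ l' →
      Disjoint (Ioc (σ k) (τ k)) (Ioc (σ l') (τ l')) := by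
    have key : ∀ k l' : Fin (m + 1), (k : ℕ) < (l' : ℕ) →
        Disjoint (Ioc (σ k) (τ k)) (Ioc (σ l') (τ l')) := by
      intro k l' hkl
      rw [Set.Ioc_disjoint_Ioc]
      have h1 : τ k ≤ σ l' := (hτle k).trans (hsmono hkl)
      calc min (τ k) (τ l') ≤ τ k := min_le_left _ _
        _ ≤ σ l' := h1
        _ ≤ max (σ k) (σ l') := le_max_right _ _
    intro k l' hkl
    rcases lt_or_gt_of_ne (fun h => hkl (Fin.ext h) : (k : ℕ) ≠ (l' : ℕ)) with h | h
    · exact key k l' h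
    · exact (key l' k h).symm
  -- subset of D
  have hsub : ∀ k : Fin (m + 1), Ioc (σ k) (τ k) ⊆ D := by
    intro k x hx
    have hx1 : σ k < x := hx.1
    have hx2 : x ≤ τ k := hx.2
    have hxIoc : x ∈ Ioc 0 T := by
      constructor
      · exact lt_of_le_of_lt (hsbound (k : ℕ)).1 hx1
      · exact hx2.trans (hτT k)
    refine ⟨hxIoc, ?_⟩
    intro hxF
    have hxFl : x ∈ Fl := Finset.mem_filter.2 ⟨by exact hxF, hxIoc⟩
    have hxl : x ∈ l := (Finset.mem_sort (· ≤ ·)).2 hxFl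
    obtain ⟨j, hj⟩ := List.mem_iff_get.1 hxl
    have hjm : (j : ℕ) < m := j.2
    have hxs : x = s ((j : ℕ) + 1) := by rw [hsget _ hjm]; exact hj.symm
    rcases le_or_gt ((j : ℕ) + 1) (k : ℕ) with h | h
    · have : x ≤ σ k := by rw [hxs]; exact hsmono h
      exact absurd hx1 (not_lt.2 this)
    · -- k ≤ j
      have hk_le_j : (k : ℕ) ≤ (j : ℕ) := by omega
      have h1 : s ((k : ℕ) + 1) ≤ x := by rw [hxs]; exact hsmono (by omega)
      have h2 : s (k : ℕ) < s ((k : ℕ) + 1) := hstrict _ (by omega)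
      have : τ k < x := by
        apply max_lt
        · linarith
        · linarith
      exact absurd hx2 (not_le.2 this)
  refine ⟨m, σ, τ, ?_, ?_, ?_, ?_, hdisj, ?_, ?_⟩
  · rw [hσdef]; simpa using (hsbound 0).1
  · intro k; exact le_max_right _ _
  · exact hτT _
  · intro k
    have : τ k.castSucc ≤ s ((k : ℕ) + 1) := by
      have := hτle k.castSucc
      simpa using this
    simpa [hσdef] using this
  · -- length bound
    rw [telescope_aux]
    have hgap : ∀ k : Fin m, σ k.succ - τ k.castSucc ≤ η := by
      intro k
      have h1 : s ((k : ℕ) + 1) - η ≤ τ k.castSucc := by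
        simp only [hτdef, Fin.coe_castSucc]
        exact le_max_left _ _
      have h2 : σ k.succ = s ((k : ℕ) + 1) := by simp [hσdef]
      linarith
    have hsum_gap : ∑ k : Fin m, (σ k.succ - τ k.castSucc) ≤ (m : ℝ) * η := by
      calc ∑ k : Fin m, (σ k.succ - τ k.castSucc) ≤ ∑ _k : Fin m, η :=
            Finset.sum_le_sum fun k _ => hgap k
        _ = (m : ℝ) * η := by simp [mul_comm]
    have hτlast : T - η ≤ τ (Fin.last m) := by
      have : s (m + 1) = T := hsTop _ le_rfl
      calc T - η = s (m + 1) - η := by rw [this]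
        _ ≤ τ (Fin.last m) := by simp only [hτdef, Fin.val_last]; exact le_max_left _ _
    have hσ0 : σ 0 = 0 := by simp [hσdef, hs0]
    have hε_eq : ((m : ℝ) + 1) * η = ε := by
      rw [hηdef]; field_simp
    rw [hσ0]
    linarith
  · -- jump sum bound
    have hindsum : ∀ k : Fin (m + 1), Summable ((Ioc (σ k) (τ k)).indicator g) := by
      intro k
      apply Summable.of_nonneg_of_le
        (fun t => Set.indicator_nonneg (fun x _ => hg0 x) t) (fun t => ?_) hsumD
      by_cases ht : t ∈ Ioc (σ k) (τ k)
      · rw [Set.indicator_of_mem ht, Set.indicator_of_mem (hsub k ht)]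
      · rw [Set.indicator_of_notMem ht]
        exact Set.indicator_nonneg (fun x _ => hg0 x) t
    have h7 : ∑ k, (∑' t : Ioc (σ k) (τ k), g ↑t)
        = ∑' x, ∑ k : Fin (m + 1), (Ioc (σ k) (τ k)).indicator g x := by
      rw [Summable.tsum_finsetSum (fun k _ => hindsum k)]
      exact Finset.sum_congr rfl fun k _ => tsum_subtype _ _
    rw [h7]
    have hpt : ∀ x, ∑ k : Fin (m + 1), (Ioc (σ k) (τ k)).indicator g x
        ≤ D.indicator g x := by
      intro x
      by_cases hx : ∃ k, x ∈ Ioc (σ k) (τ k)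
      · obtain ⟨k₀, hk₀⟩ := hx
        have heq : ∑ k, (Ioc (σ k) (τ k)).indicator g x = g x := by
          rw [Finset.sum_eq_single_of_mem k₀ (Finset.mem_univ _)]
          · exact Set.indicator_of_mem hk₀ g
          · intro b _ hb
            apply Set.indicator_of_notMem
            intro hxb
            exact (Set.disjoint_left.1 (hdisj b k₀ hb)) hxb hk₀
        rw [heq, Set.indicator_of_mem (hsub k₀ hk₀)]
      · push_neg at hx
        rw [Finset.sum_eq_zero (fun k _ => Set.indicator_of_notMem (hx k) g)]
        exact Set.indicator_nonneg (fun y _ => hg0 y) x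
    calc ∑' x, ∑ k : Fin (m + 1), (Ioc (σ k) (τ k)).indicator g x
        ≤ ∑' x, D.indicator g x :=
          Summable.tsum_le_tsum hpt (summable_sum fun k _ => hindsum k) hsumD
      _ ≤ δ := hD


/-- **Peng's lemma on concentrating the squared jumps of an increasing function.**
For a nondecreasing right-continuous `K` and any `ε, δ > 0` there are finitely many points
`0 ≤ σ₀ ≤ τ₀ ≤ σ₁ ≤ ⋯ ≤ σ_N ≤ τ_N ≤ T` such that the intervals `(σ_k, τ_k]` are pairwise
disjoint, of total length at least `T - ε`, and the sum over them of the squared jumps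
`(ΔK_t)² = (K t - K(t⁻))²` is at most `δ`. -/
theorem squared_jumps_concentration (T : ℝ) (hT : 0 < T) (K : ℝ → ℝ)
    (hmono : Monotone K) (hrc : ∀ t : ℝ, ContinuousWithinAt K (Ici t) t)
    (ε δ : ℝ) (hε : 0 < ε) (hδ : 0 < δ) :
    ∃ (N : ℕ) (σ τ : Fin (N + 1) → ℝ),
      0 ≤ σ 0 ∧ (∀ k, σ k ≤ τ k) ∧ τ (Fin.last N) ≤ T ∧
      (∀ k : Fin N, τ k.castSucc ≤ σ k.succ) ∧
      (∀ k l, k ≠ l → Disjoint (Ioc (σ k) (τ k)) (Ioc (σ l) (τ l))) ∧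
      T - ε ≤ ∑ k, (τ k - σ k) ∧
      ∑ k, (∑' t : Ioc (σ k) (τ k), (K ↑t - Function.leftLim K ↑t) ^ 2) ≤ δ := by
  classical
  set J : ℝ → ℝ := fun t => K t - Function.leftLim K t with hJdef
  set g : ℝ → ℝ := fun t => (K t - Function.leftLim K t) ^ 2 with hgdef
  have hJ0 : ∀ t, 0 ≤ J t := fun t => sub_nonneg.2 (hmono.leftLim_le le_rfl)
  have hg0 : ∀ t, 0 ≤ g t := fun t => sq_nonneg _
  have hM0 : (0:ℝ) ≤ K T - K 0 := sub_nonneg.2 (hmono hT.le)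
  have hiJ0 : ∀ t, 0 ≤ (Ioc 0 T).indicator J t :=
    fun t => Set.indicator_nonneg (fun x _ => hJ0 x) t
  have hsumJ : Summable ((Ioc 0 T).indicator J) :=
    summable_of_sum_le hiJ0 (jump_sum_le T hT K hmono hrc)
  have hgJ : ∀ t, (Ioc 0 T).indicator g t ≤ (K T - K 0) * (Ioc 0 T).indicator J t := by
    intro t
    by_cases ht : t ∈ Ioc 0 T
    · rw [Set.indicator_of_mem ht, Set.indicator_of_mem ht]
      have hJle : J t ≤ K T - K 0 := by
        have h1 : K t ≤ K T := hmono ht.2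
        have h2 : K 0 ≤ Function.leftLim K t := hmono.le_leftLim ht.1
        simp only [hJdef]
        linarith
      calc g t = J t * J t := by rw [hgdef, hJdef]; ring
        _ ≤ (K T - K 0) * J t := mul_le_mul_of_nonneg_right hJle (hJ0 t)
    · rw [Set.indicator_of_notMem ht, Set.indicator_of_notMem ht, mul_zero]
  have hsumg : Summable ((Ioc 0 T).indicator g) := by
    apply Summable.of_nonneg_of_le (fun t => Set.indicator_nonneg (fun x _ => hg0 x) t) hgJ
    exact hsumJ.mul_left _
  obtain ⟨F, hF⟩ :
      ∃ F : Finset ℝ, ∑' x : {x // x ∉ F}, (Ioc 0 T).indicator g ↑x < δ :=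
    ((tendsto_order.1 (tendsto_tsum_compl_atTop_zero ((Ioc 0 T).indicator g))).2 δ hδ).exists
  set D : Set ℝ := Ioc 0 T \ ↑F with hDdef
  have hDind : ∀ x, D.indicator g x = ((↑F : Set ℝ)ᶜ).indicator ((Ioc 0 T).indicator g) x := by
    intro x
    rw [Set.indicator_indicator]
    congr 1
    rw [hDdef, Set.diff_eq, Set.inter_comm]
  have hD : ∑' x, D.indicator g x ≤ δ := by
    have : ∑' x : {x // x ∉ F}, (Ioc 0 T).indicator g ↑x
        = ∑' x, ((↑F : Set ℝ)ᶜ).indicator ((Ioc 0 T).indicator g) x := by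
      rw [← tsum_subtype]
      rfl
    rw [tsum_congr hDind, ← this]
    exact hF.le
  have hsumD : Summable (D.indicator g) := by
    apply Summable.of_nonneg_of_le (fun t => Set.indicator_nonneg (fun x _ => hg0 x) t)
      (fun t => ?_) hsumg
    by_cases ht : t ∈ D
    · rw [Set.indicator_of_mem ht, Set.indicator_of_mem ht.1]
    · rw [Set.indicator_of_notMem ht]
      exact Set.indicator_nonneg (fun x _ => hg0 x) t
  exact construction_aux T hT K g hg0 hsumg ε δ hε hδ F hD hsumD
end

section
/- Assume (HFC) and (HBC), let A ⊂ ℝ^q be compact with interior Å, and let λ be a finite Borel measure on A such that λ(O ∩ Å) > 0 for every a ∈ Å and every open neighborhood O of a in ℝ^q. For each m ∈ ℕ let v^m : [0,T] × ℝ^d × ℝ^q → ℝ be a continuous viscosity supersolution of the penalized integro-differential variational inequality with penalization parameter m (as defined in the context), and suppose v^m ≤ v^{m+1} on [0,T] × ℝ^d × ℝ^q, v^m(t,x,a) ≤ u(t,x) for all (t,x,a) and all m, and v^m converges pointwise to a finite function v as m → ∞. Then v is a viscosity supersolution of −|D_a v(t,x,a)| = 0 on [0,T] × ℝ^d × Å: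 for every (t,x,a) ∈ [0,T] × ℝ^d × Å and every function φ on [0,T] × ℝ^d × ℝ^q, continuously differentiable in t and twice continuously differentiable in (x,a), such that v − φ attains its minimum over [0,T] × ℝ^d × ℝ^q at (t,x,a), one has D_a φ(t,x,a) = 0. -/
open MeasureTheory Filter Set

noncomputable section

/-- Euclidean space `ℝ^d`. -/
abbrev Evec (d : ℕ) := EuclideanSpace ℝ (Fin d)

/-- Test functions for the penalized equation on `[0,T] × ℝ^d × ℝ^q`: `φ` is `C¹` in `t`
and `C²` in `(x,a)`, with the time derivative `φt`, the gradient `Dxφ` and the Hessian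
`Dxxφ` in the variable `x` exhibited, all jointly continuous. -/
def IsTestFn12 (d q : ℕ) (φ φt : ℝ → Evec d → Evec q → ℝ)
    (Dxφ : ℝ → Evec d → Evec q → Evec d)
    (Dxxφ : ℝ → Evec d → Evec q → (Evec d →L[ℝ] Evec d)) : Prop :=
  (∀ t x a, HasDerivAt (fun s => φ s x a) (φt t x a) t) ∧
  (∀ t, ContDiff ℝ 2 (fun p : Evec d × Evec q => φ t p.1 p.2)) ∧
  (∀ t x a, HasGradientAt (fun y => φ t y a) (Dxφ t x a) x) ∧
  (∀ t x a, HasFDerivAt (fun y => Dxφ t y a) (Dxxφ t x a) x) ∧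
  Continuous (fun p : ℝ × Evec d × Evec q => φ p.1 p.2.1 p.2.2) ∧
  Continuous (fun p : ℝ × Evec d × Evec q => φt p.1 p.2.1 p.2.2) ∧
  Continuous (fun p : ℝ × Evec d × Evec q => Dxφ p.1 p.2.1 p.2.2) ∧
  Continuous (fun p : ℝ × Evec d × Evec q => Dxxφ p.1 p.2.1 p.2.2)

/-- The penalized Hamiltonian
`-∂_t φ - b(x,a)·D_x φ - ½ tr(σσᵀ(x,a) D_x² φ) - f(x,a,w,σᵀ(x,a)D_x φ)
 - m ∫_A (φ(t,x,a') - φ(t,x,a))⁺ λ(da')`, where `w` is the value of the (super/sub)solution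
at `(t,x,a)`. -/
def penalHam (d q : ℕ) (A : Set (Evec q)) (lam : Measure (Evec q))
    (b : Evec d → Evec q → Evec d) (σ : Evec d → Evec q → (Evec d →L[ℝ] Evec d))
    (f : Evec d → Evec q → ℝ → Evec d → ℝ) (m : ℕ) (w : ℝ)
    (φ : ℝ → Evec d → Evec q → ℝ) (φt : ℝ) (Dxφ : Evec d) (Dxxφ : Evec d →L[ℝ] Evec d)
    (t : ℝ) (x : Evec d) (a : Evec q) : ℝ :=
  -φt - (inner ℝ (b x a) Dxφ : ℝ)
    - (1 / 2) * LinearMap.trace ℝ (Evec d)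
        ((σ x a ∘L ContinuousLinearMap.adjoint (σ x a) ∘L Dxxφ) : Evec d →ₗ[ℝ] Evec d)
    - f x a w (ContinuousLinearMap.adjoint (σ x a) Dxφ)
    - (m : ℝ) * ∫ a' in A, max (φ t x a' - φ t x a) 0 ∂lam

/-- `v` is a viscosity supersolution of the penalized integro-differential variational
inequality (5.20) with penalization parameter `m`. -/
def PenalSupersol (d q : ℕ) (T : ℝ) (A : Set (Evec q)) (lam : Measure (Evec q))
    (b : Evec d → Evec q → Evec d) (σ : Evec d → Evec q → (Evec d →L[ℝ] Evec d))
    (f : Evec d → Evec q → ℝ → Evec d → ℝ) (u : ℝ → Evec d → ℝ)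
    (m : ℕ) (v : ℝ → Evec d → Evec q → ℝ) : Prop :=
  ∀ (φ φt : ℝ → Evec d → Evec q → ℝ) (Dxφ : ℝ → Evec d → Evec q → Evec d)
    (Dxxφ : ℝ → Evec d → Evec q → (Evec d →L[ℝ] Evec d)),
    IsTestFn12 d q φ φt Dxφ Dxxφ →
    ∀ t x a, t ∈ Icc (0 : ℝ) T →
      (∀ s y α, s ∈ Icc (0 : ℝ) T → v t x a - φ t x a ≤ v s y α - φ s y α) →
      0 ≤ max
        (penalHam d q A lam b σ f m (v t x a) φ (φt t x a) (Dxφ t x a) (Dxxφ t x a) t x a)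
        (v t x a - u t x)


section AuxiliaryLemmas

open Manifold

/-- Any continuous real function on a finite-dimensional normed space admits a smooth
majorant. -/
lemma exists_smooth_majorant {F : Type*} [NormedAddCommGroup F] [NormedSpace ℝ F]
    [FiniteDimensional ℝ F] (G : F → ℝ) (hG : Continuous G) :
    ∃ H : F → ℝ, ContDiff ℝ ((⊤:ℕ∞):WithTop ℕ∞) H ∧ ∀ z, G z ≤ H z := by
  have Hloc : ∀ x : F, ∃ c : ℝ, ∀ᶠ y in nhds x, c ∈ Ici (G y) := by
    intro x
    obtain ⟨c, hc⟩ := (isCompact_closedBall x 1).exists_bound_of_continuousOn hG.continuousOn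
    refine ⟨c, ?_⟩
    filter_upwards [Metric.closedBall_mem_nhds x one_pos] with y hy
    exact mem_Ici.2 ((abs_le.mp (by simpa using hc y hy)).2)
  obtain ⟨g, hg⟩ := exists_contMDiffMap_forall_mem_convex_of_local_const
    (I := modelWithCornersSelf ℝ F) (n := (⊤:ℕ∞))
    (t := fun z => Ici (G z)) (fun z => convex_Ici (G z)) Hloc
  refine ⟨g, ?_, fun z => hg z⟩
  have := g.contMDiff
  rw [contMDiff_iff_contDiff] at this
  exact this

/-- inclusion `y ↦ (0, y, 0)`. -/
def Jx (d q : ℕ) : Evec d →L[ℝ] ℝ × Evec d × Evec q :=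
  ContinuousLinearMap.prod 0 ((ContinuousLinearMap.id ℝ (Evec d)).prod 0)

/-- inclusion `α ↦ (0, 0, α)`. -/
def Ja (d q : ℕ) : Evec q →L[ℝ] ℝ × Evec d × Evec q :=
  ContinuousLinearMap.prod 0 (ContinuousLinearMap.prod 0 (ContinuousLinearMap.id ℝ (Evec q)))

/-- from a linear functional on `ℝ × ℝ^d × ℝ^q`, extract the gradient in the `x` variable. -/
def gradxL (d q : ℕ) : ((ℝ × Evec d × Evec q) →L[ℝ] ℝ) →L[ℝ] Evec d :=
  ((InnerProductSpace.toDual ℝ (Evec d)).symm.toContinuousLinearEquiv :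
      (Evec d →L[ℝ] ℝ) ≃L[ℝ] Evec d).toContinuousLinearMap ∘L
    ((ContinuousLinearMap.compL ℝ (Evec d) (ℝ × Evec d × Evec q) ℝ).flip (Jx d q))

/-- Derivative package for a smooth function on `ℝ × ℝ^d × ℝ^q`. -/
lemma smooth_package {d q : ℕ} (χ : ℝ × Evec d × Evec q → ℝ)
    (hχ : ContDiff ℝ ((⊤:ℕ∞):WithTop ℕ∞) χ) :
    (∀ t x a, HasDerivAt (fun s => χ (s, x, a)) (fderiv ℝ χ (t,x,a) (1,0,0)) t) ∧
    (∀ t, ContDiff ℝ 2 (fun p : Evec d × Evec q => χ (t, p.1, p.2))) ∧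
    (∀ t x a, HasGradientAt (fun y => χ (t,y,a)) (gradxL d q (fderiv ℝ χ (t,x,a))) x) ∧
    (∀ t x a, HasFDerivAt (fun y => gradxL d q (fderiv ℝ χ (t,y,a)))
      ((gradxL d q) ∘L ((fderiv ℝ (fderiv ℝ χ) (t,x,a)) ∘L (Jx d q))) x) ∧
    Continuous (fun p : ℝ × Evec d × Evec q => fderiv ℝ χ p (1,0,0)) ∧
    Continuous (fun p : ℝ × Evec d × Evec q => gradxL d q (fderiv ℝ χ p)) ∧
    Continuous (fun p : ℝ × Evec d × Evec q =>
      (gradxL d q) ∘L ((fderiv ℝ (fderiv ℝ χ) p) ∘L (Jx d q))) ∧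
    (∀ z, HasFDerivAt χ (fderiv ℝ χ z) z) := by
  have h1top : (1 : WithTop ℕ∞) ≤ ((⊤:ℕ∞):WithTop ℕ∞) := by exact_mod_cast le_top
  have h2top : (2 : WithTop ℕ∞) ≤ ((⊤:ℕ∞):WithTop ℕ∞) := by norm_cast
  have hstop : ((⊤:ℕ∞):WithTop ℕ∞) + 1 ≤ ((⊤:ℕ∞):WithTop ℕ∞) := by
    norm_cast
  have hdiff : Differentiable ℝ χ := hχ.differentiable (by simp)
  have hfd : ContDiff ℝ ((⊤:ℕ∞):WithTop ℕ∞) (fderiv ℝ χ) := hχ.fderiv_right hstop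
  have hcurve : ∀ x a, ∀ t : ℝ, HasDerivAt (fun s : ℝ => ((s, x, a) : ℝ × Evec d × Evec q))
      ((1,0,0) : ℝ × Evec d × Evec q) t := by
    intro x a t
    exact (hasDerivAt_id t).prodMk (hasDerivAt_const t (x, a))
  have hJx : ∀ t a, ∀ x : Evec d, HasFDerivAt (fun y : Evec d => ((t, y, a) : ℝ × Evec d × Evec q))
      (Jx d q) x := by
    intro t a x
    exact (hasFDerivAt_const t x).prodMk ((hasFDerivAt_id x).prodMk (hasFDerivAt_const a x))
  refine ⟨?_, ?_, ?_, ?_, ?_, ?_, ?_, fun z => (hdiff z).hasFDerivAt⟩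
  · intro t x a
    exact ((hdiff (t,x,a)).hasFDerivAt).comp_hasDerivAt t (hcurve x a t)
  · intro t
    have : ContDiff ℝ ((⊤:ℕ∞):WithTop ℕ∞)
        (fun p : Evec d × Evec q => ((t, p.1, p.2) : ℝ × Evec d × Evec q)) :=
      (contDiff_const.prodMk (contDiff_fst.prodMk contDiff_snd))
    exact (hχ.comp this).of_le h2top
  · intro t x a
    have h1 : HasFDerivAt (fun y => χ (t,y,a)) ((fderiv ℝ χ (t,x,a)) ∘L (Jx d q)) x :=
      ((hdiff (t,x,a)).hasFDerivAt).comp x (hJx t a x)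
    rw [hasGradientAt_iff_hasFDerivAt]
    refine h1.congr_fderiv ?_
    simp [gradxL]
  · intro t x a
    have h2 : HasFDerivAt (fderiv ℝ χ) (fderiv ℝ (fderiv ℝ χ) (t,x,a)) (t,x,a) :=
      (hfd.differentiable (by simp) (t,x,a)).hasFDerivAt
    have h3 : HasFDerivAt (fun y : Evec d => fderiv ℝ χ (t,y,a))
        ((fderiv ℝ (fderiv ℝ χ) (t,x,a)) ∘L (Jx d q)) x := h2.comp x (hJx t a x)
    exact (gradxL d q).hasFDerivAt.comp x h3
  · exact (hfd.continuous).clm_apply continuous_const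
  · exact (gradxL d q).continuous.comp hfd.continuous
  · have : Continuous (fderiv ℝ (fderiv ℝ χ)) := hfd.continuous_fderiv (by simp)
    exact continuous_const.clm_comp (this.clm_comp continuous_const)

/-- difference rule for gradients. -/
lemma hasGradientAt_sub' {E : Type*} [NormedAddCommGroup E] [InnerProductSpace ℝ E]
    [CompleteSpace E]
    {f g : E → ℝ} {f' g' : E} {x : E}
    (hf : HasGradientAt f f' x) (hg : HasGradientAt g g' x) :
    HasGradientAt (fun y => f y - g y) (f' - g') x := by
  rw [hasGradientAt_iff_hasFDerivAt] at hf hg ⊢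
  have := hf.sub hg
  rw [map_sub]; exact this

end AuxiliaryLemmas


set_option maxHeartbeats 2000000 in
/-- **Supersolution property of the constraint equation `-|D_a v| = 0`
(key step in the proof of Proposition 5.2).**  Under (HFC), (HBC) and the support condition
on `λ`, if each `v^m` is a continuous viscosity supersolution of the penalized equation with
parameter `m`, the sequence is nondecreasing in `m`, dominated by the obstacle `u`, and
converges pointwise to `v`, then `v` is a viscosity supersolution of `-|D_a v| = 0` on
`[0,T] × ℝ^d × Å`: any `C^{1,2}` test function `φ` such that `v - φ` attains its minimum
over `[0,T] × ℝ^d × ℝ^q` at a point `(t,x,a)` with `a` interior to `A` satisfies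
`D_a φ(t,x,a) = 0`. -/
theorem limit_is_supersolution_of_gradient_constraint (d q : ℕ) (T : ℝ) (hT : 0 < T)
    (A : Set (Evec q)) (hA : IsCompact A)
    (lam : Measure (Evec q)) [IsFiniteMeasure lam]
    (hlam : ∀ a ∈ interior A, ∀ O : Set (Evec q), IsOpen O → a ∈ O →
      0 < lam (O ∩ interior A))
    (b : Evec d → Evec q → Evec d) (σ : Evec d → Evec q → (Evec d →L[ℝ] Evec d))
    (g : Evec d → ℝ) (f : Evec d → Evec q → ℝ → Evec d → ℝ) (u : ℝ → Evec d → ℝ)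
    (C : ℝ)
    (hFC : ∀ x x' a a', ‖b x a - b x' a'‖ + ‖σ x a - σ x' a'‖ ≤ C * (‖x - x'‖ + ‖a - a'‖))
    (hg : Continuous g)
    (hf : Continuous fun p : Evec d × Evec q × ℝ × Evec d => f p.1 p.2.1 p.2.2.1 p.2.2.2)
    (hu : Continuous fun p : ℝ × Evec d => u p.1 p.2)
    (c h : ℝ) (hc : 0 ≤ c) (hh : 0 ≤ h)
    (hfgrowth : ∀ x a, |f x a 0 0| ≤ c * (1 + ‖x‖ ^ h + ‖a‖ ^ h))
    (hgugrowth : ∀ t ∈ Icc (0 : ℝ) T, ∀ x, |g x| + |u t x| ≤ c * (1 + ‖x‖ ^ h))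
    (hfLip : ∀ x a y y' z z', |f x a y z - f x a y' z'| ≤ C * (|y - y'| + ‖z - z'‖))
    (huT : ∀ x, g x ≤ u T x)
    (huk : ∃ (uk ukt : ℕ → ℝ → Evec d → ℝ) (Duk : ℕ → ℝ → Evec d → Evec d)
        (D2uk : ℕ → ℝ → Evec d → (Evec d →L[ℝ] Evec d)) (c' : ℝ),
      (∀ k t x, HasDerivAt (fun s => uk k s x) (ukt k t x) t) ∧
      (∀ k t x, HasGradientAt (fun y => uk k t y) (Duk k t x) x) ∧
      (∀ k t x, HasFDerivAt (fun y => Duk k t y) (D2uk k t x) x) ∧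
      (∀ k, Continuous fun p : ℝ × Evec d => ukt k p.1 p.2) ∧
      (∀ k, Continuous fun p : ℝ × Evec d => Duk k p.1 p.2) ∧
      (∀ k, Continuous fun p : ℝ × Evec d => D2uk k p.1 p.2) ∧
      (∀ k t x, uk (k + 1) t x ≤ uk k t x) ∧
      (∀ t x, Tendsto (fun k => uk k t x) atTop (nhds (u t x))) ∧
      (∀ k t x, |ukt k t x| + ‖Duk k t x‖ + ‖D2uk k t x‖ ≤ c' * (1 + ‖x‖ ^ h)))
    (vm : ℕ → ℝ → Evec d → Evec q → ℝ)
    (hvmcont : ∀ m, Continuous fun p : ℝ × Evec d × Evec q => vm m p.1 p.2.1 p.2.2)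
    (hvmsuper : ∀ m, PenalSupersol d q T A lam b σ f u m (vm m))
    (hvmmono : ∀ m t x a, vm m t x a ≤ vm (m + 1) t x a)
    (hvmle : ∀ m t x a, vm m t x a ≤ u t x)
    (v : ℝ → Evec d → Evec q → ℝ)
    (hvconv : ∀ t x a, Tendsto (fun m => vm m t x a) atTop (nhds (v t x a))) :
    ∀ (φ φt : ℝ → Evec d → Evec q → ℝ) (Dxφ : ℝ → Evec d → Evec q → Evec d)
      (Dxxφ : ℝ → Evec d → Evec q → (Evec d →L[ℝ] Evec d))
      (Daφ : ℝ → Evec d → Evec q → Evec q),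
      IsTestFn12 d q φ φt Dxφ Dxxφ →
      (∀ t x a, HasGradientAt (fun α => φ t x α) (Daφ t x a) a) →
      ∀ t x a, t ∈ Icc (0 : ℝ) T → a ∈ interior A →
        (∀ s y α, s ∈ Icc (0 : ℝ) T → v t x a - φ t x a ≤ v s y α - φ s y α) →
        Daφ t x a = 0 := by
  intro φ φt Dxφ Dxxφ Daφ htest hDa t₀ x₀ a₀ ht₀ ha₀ hmin
  classical
  obtain ⟨hφt, hφC2, hφgrad, hφhess, hφc, hφtc, hφxc, hφxxc⟩ := htest
  have mono : ∀ t x a, Monotone fun m => vm m t x a := fun t x a =>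
    monotone_nat_of_le_succ fun m => hvmmono m t x a
  have hvm_le_v : ∀ m t x a, vm m t x a ≤ v t x a := fun m t x a =>
    ge_of_tendsto (hvconv t x a) (eventually_atTop.2 ⟨m, fun k hk => mono t x a hk⟩)
  have hvm_le : ∀ j m, j ≤ m → ∀ t x a, vm j t x a ≤ vm m t x a :=
    fun j m hjm t x a => mono t x a hjm
  have hvu : ∀ t x a, v t x a ≤ u t x := fun t x a =>
    le_of_tendsto (hvconv t x a) (Eventually.of_forall fun m => hvmle m t x a)
  rcases eq_or_lt_of_le (hvu t₀ x₀ a₀) with hcase | hlt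
  · -- the case `v = u` at the reference point: `φ(t₀,x₀,⬝)` has a global max at `a₀`
    have hmax : ∀ α, φ t₀ x₀ α ≤ φ t₀ x₀ a₀ := by
      intro α
      have h1 := hmin t₀ x₀ α ht₀
      have h2 := hvu t₀ x₀ α
      linarith [hcase]
    have hloc : IsLocalMax (fun α => φ t₀ x₀ α) a₀ := Eventually.of_forall hmax
    have h0 := hloc.hasFDerivAt_eq_zero (hDa t₀ x₀ a₀).hasFDerivAt
    apply (InnerProductSpace.toDual ℝ (Evec q)).injective
    rw [map_zero]
    exact h0
  · -- main case : `v < u` at the reference point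
    -- Step 1 : construct the localizing test-function correction χ
    obtain ⟨H, hHsm, hHge⟩ := exists_smooth_majorant
      (fun z : ℝ × Evec d × Evec q =>
        max (2*((v t₀ x₀ a₀ - φ t₀ x₀ a₀)+1)
          + 2*(φ z.1 z.2.1 z.2.2 - vm 0 z.1 z.2.1 z.2.2)) 0)
      (Continuous.max (continuous_const.add (continuous_const.mul (hφc.sub (hvmcont 0)))) continuous_const)
    have hH0 : ∀ z, 0 ≤ H z := fun z => le_trans (le_max_right _ _) (hHge z)
    obtain ⟨χ, hχdef⟩ : ∃ χ : ℝ × Evec d × Evec q → ℝ, χ = fun z =>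
        (1 - Real.exp (-((z.1 - t₀)^2 + ‖z.2.1 - x₀‖^2 + ‖z.2.2 - a₀‖^2))) * (H z + 1) :=
      ⟨_, rfl⟩
    have hQnonneg : ∀ z : ℝ × Evec d × Evec q,
        0 ≤ (z.1 - t₀)^2 + ‖z.2.1 - x₀‖^2 + ‖z.2.2 - a₀‖^2 := by
      intro z; positivity
    have hχsm : ContDiff ℝ ((⊤:ℕ∞):WithTop ℕ∞) χ := by
      rw [hχdef]
      refine ContDiff.mul (contDiff_const.sub (ContDiff.exp ?_)) (hHsm.add contDiff_const)
      refine ContDiff.neg (ContDiff.add (ContDiff.add ?_ ?_) ?_)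
      · exact (contDiff_fst.sub contDiff_const).pow 2
      · exact ContDiff.norm_sq (𝕜 := ℝ) (contDiff_snd.fst.sub contDiff_const)
      · exact ContDiff.norm_sq (𝕜 := ℝ) (contDiff_snd.snd.sub contDiff_const)
    have hχ0 : χ (t₀, x₀, a₀) = 0 := by rw [hχdef]; simp
    have hχnonneg : ∀ z, 0 ≤ χ z := by
      intro z
      rw [hχdef]
      refine mul_nonneg ?_ (by linarith [hH0 z])
      have : Real.exp (-((z.1 - t₀)^2 + ‖z.2.1 - x₀‖^2 + ‖z.2.2 - a₀‖^2)) ≤ Real.exp 0 :=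
        Real.exp_le_exp.2 (by linarith [hQnonneg z])
      simp only [Real.exp_zero] at this
      linarith
    have hχzero : ∀ z, χ z = 0 → z = (t₀, x₀, a₀) := by
      rintro ⟨z1, z2, z3⟩ hz
      rw [hχdef] at hz
      rcases mul_eq_zero.1 hz with hz1 | hz2
      · have hQ0 : (z1 - t₀)^2 + ‖z2 - x₀‖^2 + ‖z3 - a₀‖^2 = 0 := by
          have hexp1 : Real.exp (-((z1 - t₀)^2 + ‖z2 - x₀‖^2 + ‖z3 - a₀‖^2)) = Real.exp 0 := by
            rw [Real.exp_zero]; linarith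
          have := Real.exp_injective hexp1
          linarith [this]
        have p1 : (0:ℝ) ≤ (z1 - t₀)^2 := sq_nonneg _
        have p2 : (0:ℝ) ≤ ‖z2 - x₀‖^2 := sq_nonneg _
        have p3 : (0:ℝ) ≤ ‖z3 - a₀‖^2 := sq_nonneg _
        have e1 : (z1 - t₀)^2 = 0 := by linarith
        have e2 : ‖z2 - x₀‖^2 = 0 := by linarith
        have e3 : ‖z3 - a₀‖^2 = 0 := by linarith
        have f1 : z1 = t₀ := by
          have := pow_eq_zero_iff (n := 2) (by norm_num) |>.1 e1
          linarith [this]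
        have f2 : z2 = x₀ := by
          have := pow_eq_zero_iff (n := 2) (by norm_num) |>.1 e2
          rw [norm_eq_zero] at this
          exact sub_eq_zero.1 this
        have f3 : z3 = a₀ := by
          have := pow_eq_zero_iff (n := 2) (by norm_num) |>.1 e3
          rw [norm_eq_zero] at this
          exact sub_eq_zero.1 this
        rw [f1, f2, f3]
      · exact absurd hz2 (by have := hH0 (z1, z2, z3); intro hcon; linarith)
    have hχfar : ∀ z : ℝ × Evec d × Evec q,
        1 ≤ (z.1 - t₀)^2 + ‖z.2.1 - x₀‖^2 + ‖z.2.2 - a₀‖^2 →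
        (v t₀ x₀ a₀ - φ t₀ x₀ a₀) + 1 ≤
          vm 0 z.1 z.2.1 z.2.2 - φ z.1 z.2.1 z.2.2 + χ z := by
      intro z hz
      have hHz := hHge z
      have hH0z := hH0 z
      have hG1 : 2*((v t₀ x₀ a₀ - φ t₀ x₀ a₀)+1)
          + 2*(φ z.1 z.2.1 z.2.2 - vm 0 z.1 z.2.1 z.2.2) ≤ H z :=
        le_trans (le_max_left _ _) hHz
      have h2e : (2:ℝ) ≤ Real.exp 1 := by
        have := Real.add_one_le_exp (1:ℝ); linarith
      have hmule : Real.exp (-1 : ℝ) * Real.exp 1 = 1 := by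
        rw [← Real.exp_add]; norm_num
      have he1 : Real.exp (-1 : ℝ) ≤ 1/2 := by
        nlinarith [Real.exp_pos (-1 : ℝ)]
      have hexp : Real.exp (-((z.1 - t₀)^2 + ‖z.2.1 - x₀‖^2 + ‖z.2.2 - a₀‖^2)) ≤
          Real.exp (-1) := Real.exp_le_exp.2 (by linarith)
      have hθ : (1:ℝ)/2 ≤ 1 - Real.exp (-((z.1 - t₀)^2 + ‖z.2.1 - x₀‖^2 + ‖z.2.2 - a₀‖^2)) := by
        linarith
      have hmul : (1/2) * (H z + 1) ≤
          (1 - Real.exp (-((z.1 - t₀)^2 + ‖z.2.1 - x₀‖^2 + ‖z.2.2 - a₀‖^2))) * (H z + 1) :=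
        mul_le_mul_of_nonneg_right hθ (by linarith)
      have hχz : χ z =
          (1 - Real.exp (-((z.1 - t₀)^2 + ‖z.2.1 - x₀‖^2 + ‖z.2.2 - a₀‖^2))) * (H z + 1) := by
        rw [hχdef]
      linarith
    -- Step 2: the perturbed test function ψ = φ - χ with its derivative package
    obtain ⟨hχt, hχC2, hχgrad, hχhess, hχtc, hχxc, hχxxc, hχfd⟩ := smooth_package χ hχsm
    obtain ⟨ψ, hψdef⟩ : ∃ ψ : ℝ → Evec d → Evec q → ℝ,
        ψ = fun t x a => φ t x a - χ (t, x, a) := ⟨_, rfl⟩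
    obtain ⟨ψt', hψtdef⟩ : ∃ ψt' : ℝ → Evec d → Evec q → ℝ,
        ψt' = fun t x a => φt t x a - fderiv ℝ χ (t,x,a) (1,0,0) := ⟨_, rfl⟩
    obtain ⟨ψx', hψxdef⟩ : ∃ ψx' : ℝ → Evec d → Evec q → Evec d,
        ψx' = fun t x a => Dxφ t x a - gradxL d q (fderiv ℝ χ (t,x,a)) := ⟨_, rfl⟩
    obtain ⟨ψxx', hψxxdef⟩ : ∃ ψxx' : ℝ → Evec d → Evec q → (Evec d →L[ℝ] Evec d),
        ψxx' = fun t x a => Dxxφ t x a -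
          ((gradxL d q) ∘L ((fderiv ℝ (fderiv ℝ χ) (t,x,a)) ∘L (Jx d q))) := ⟨_, rfl⟩
    have hψc : Continuous (fun p : ℝ × Evec d × Evec q => ψ p.1 p.2.1 p.2.2) := by
      rw [hψdef]; exact hφc.sub hχsm.continuous
    have htest' : IsTestFn12 d q ψ ψt' ψx' ψxx' := by
      rw [hψdef, hψtdef, hψxdef, hψxxdef]
      refine ⟨fun t x a => (hφt t x a).sub (hχt t x a),
        fun t => (hφC2 t).sub (hχC2 t),
        fun t x a => hasGradientAt_sub' (hφgrad t x a) (hχgrad t x a),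
        fun t x a => (hφhess t x a).sub (hχhess t x a),
        hφc.sub hχsm.continuous, hφtc.sub hχtc, hφxc.sub hχxc, hφxxc.sub hχxxc⟩
    -- Step 3: minimizers of vm - ψ
    have hKc : IsCompact ((Icc (0:ℝ) T) ×ˢ (Metric.closedBall x₀ 1 ×ˢ Metric.closedBall a₀ 1)) :=
      isCompact_Icc.prod ((isCompact_closedBall _ _).prod (isCompact_closedBall _ _))
    have hPK : ((t₀, x₀, a₀) : ℝ × Evec d × Evec q) ∈
        (Icc (0:ℝ) T) ×ˢ (Metric.closedBall x₀ 1 ×ˢ Metric.closedBall a₀ 1) :=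
      ⟨ht₀, Metric.mem_closedBall_self zero_le_one, Metric.mem_closedBall_self zero_le_one⟩
    have minsel : ∀ m : ℕ, ∃ z : ℝ × Evec d × Evec q,
        z ∈ (Icc (0:ℝ) T) ×ˢ (Metric.closedBall x₀ 1 ×ˢ Metric.closedBall a₀ 1) ∧
        z.1 ∈ Icc (0:ℝ) T ∧
        ∀ s y α, s ∈ Icc (0:ℝ) T →
          vm m z.1 z.2.1 z.2.2 - ψ z.1 z.2.1 z.2.2 ≤ vm m s y α - ψ s y α := by
      intro m
      obtain ⟨z, hzK, hzmin⟩ := hKc.exists_isMinOn ⟨_, hPK⟩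
        (Continuous.continuousOn (f := fun p : ℝ × Evec d × Evec q =>
          vm m p.1 p.2.1 p.2.2 - ψ p.1 p.2.1 p.2.2) ((hvmcont m).sub hψc))
      refine ⟨z, hzK, hzK.1, ?_⟩
      intro s y α hs
      have hPval : vm m t₀ x₀ a₀ - ψ t₀ x₀ a₀ ≤ v t₀ x₀ a₀ - φ t₀ x₀ a₀ := by
        have h1 : ψ t₀ x₀ a₀ = φ t₀ x₀ a₀ := by rw [hψdef]; simp [hχ0]
        rw [h1]
        have := hvm_le_v m t₀ x₀ a₀
        linarith
      have hzP : vm m z.1 z.2.1 z.2.2 - ψ z.1 z.2.1 z.2.2 ≤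
          vm m t₀ x₀ a₀ - ψ t₀ x₀ a₀ := hzmin hPK
      by_cases hin : ((s, y, α) : ℝ × Evec d × Evec q) ∈
          (Icc (0:ℝ) T) ×ˢ (Metric.closedBall x₀ 1 ×ˢ Metric.closedBall a₀ 1)
      · exact hzmin hin
      · have hQ1 : 1 ≤ (s - t₀)^2 + ‖y - x₀‖^2 + ‖α - a₀‖^2 := by
          by_contra hq
          push_neg at hq
          apply hin
          have n1 : (0:ℝ) ≤ (s - t₀)^2 := sq_nonneg _
          have n2 : (0:ℝ) ≤ ‖y - x₀‖^2 := sq_nonneg _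
          have n3 : (0:ℝ) ≤ ‖α - a₀‖^2 := sq_nonneg _
          refine ⟨hs, ?_, ?_⟩
          · rw [Metric.mem_closedBall, dist_eq_norm]
            nlinarith [norm_nonneg (y - x₀)]
          · rw [Metric.mem_closedBall, dist_eq_norm]
            nlinarith [norm_nonneg (α - a₀)]
        have hfar := hχfar (s, y, α) hQ1
        have hmono0 : vm 0 s y α ≤ vm m s y α := hvm_le 0 m (Nat.zero_le m) s y α
        have hψsyα : ψ s y α = φ s y α - χ (s, y, α) := by rw [hψdef]
        rw [hψsyα]
        linarith
    choose Pm hPmK hPmIcc hPmmin using minsel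
    -- Step 4: the supersolution inequality at the minimizers
    have hsup : ∀ m : ℕ, 0 ≤ max
        (penalHam d q A lam b σ f m (vm m (Pm m).1 (Pm m).2.1 (Pm m).2.2) ψ
          (ψt' (Pm m).1 (Pm m).2.1 (Pm m).2.2) (ψx' (Pm m).1 (Pm m).2.1 (Pm m).2.2)
          (ψxx' (Pm m).1 (Pm m).2.1 (Pm m).2.2) (Pm m).1 (Pm m).2.1 (Pm m).2.2)
        (vm m (Pm m).1 (Pm m).2.1 (Pm m).2.2 - u (Pm m).1 (Pm m).2.1) := fun m =>
      hvmsuper m ψ ψt' ψx' ψxx' htest' (Pm m).1 (Pm m).2.1 (Pm m).2.2 (hPmIcc m) (hPmmin m)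
    -- Step 5: a convergent subsequence of minimizers; its limit is (t₀,x₀,a₀)
    obtain ⟨Pstar, hPstarK, τ, hτmono, hτtend⟩ := hKc.tendsto_subseq hPmK
    have hEub : ∀ m, vm m (Pm m).1 (Pm m).2.1 (Pm m).2.2 - ψ (Pm m).1 (Pm m).2.1 (Pm m).2.2 ≤
        v t₀ x₀ a₀ - φ t₀ x₀ a₀ := by
      intro m
      have h1 := hPmmin m t₀ x₀ a₀ ht₀
      have h2 : ψ t₀ x₀ a₀ = φ t₀ x₀ a₀ := by rw [hψdef]; simp [hχ0]
      have h3 := hvm_le_v m t₀ x₀ a₀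
      rw [h2] at h1
      linarith
    have hcontj : ∀ j : ℕ, Continuous (fun z : ℝ × Evec d × Evec q =>
        vm j z.1 z.2.1 z.2.2 - ψ z.1 z.2.1 z.2.2) := fun j => (hvmcont j).sub hψc
    have hstar_le : ∀ j : ℕ,
        vm j Pstar.1 Pstar.2.1 Pstar.2.2 - ψ Pstar.1 Pstar.2.1 Pstar.2.2 ≤
          v t₀ x₀ a₀ - φ t₀ x₀ a₀ := by
      intro j
      have htd : Tendsto (fun k => vm j (Pm (τ k)).1 (Pm (τ k)).2.1 (Pm (τ k)).2.2
          - ψ (Pm (τ k)).1 (Pm (τ k)).2.1 (Pm (τ k)).2.2) atTop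
          (nhds (vm j Pstar.1 Pstar.2.1 Pstar.2.2 - ψ Pstar.1 Pstar.2.1 Pstar.2.2)) := by
        have h0 := ((hcontj j).tendsto Pstar).comp hτtend
        simpa only [Function.comp_def] using h0
      refine le_of_tendsto htd ?_
      filter_upwards [eventually_ge_atTop j] with k hk
      have hjk : j ≤ τ k := le_trans hk (hτmono.le_apply)
      have hmono' : vm j (Pm (τ k)).1 (Pm (τ k)).2.1 (Pm (τ k)).2.2 ≤
          vm (τ k) (Pm (τ k)).1 (Pm (τ k)).2.1 (Pm (τ k)).2.2 := hvm_le j (τ k) hjk _ _ _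
      exact le_trans (sub_le_sub_right hmono' _) (hEub (τ k))
    have hstarP : Pstar = ((t₀, x₀, a₀) : ℝ × Evec d × Evec q) := by
      have hv_star : v Pstar.1 Pstar.2.1 Pstar.2.2 - ψ Pstar.1 Pstar.2.1 Pstar.2.2 ≤
          v t₀ x₀ a₀ - φ t₀ x₀ a₀ :=
        le_of_tendsto ((hvconv Pstar.1 Pstar.2.1 Pstar.2.2).sub_const _)
          (Eventually.of_forall hstar_le)
      have hlow := hmin Pstar.1 Pstar.2.1 Pstar.2.2 hPstarK.1
      have hψstar : ψ Pstar.1 Pstar.2.1 Pstar.2.2 =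
          φ Pstar.1 Pstar.2.1 Pstar.2.2 - χ Pstar := by rw [hψdef]
      have hχle : χ Pstar ≤ 0 := by rw [hψstar] at hv_star; linarith
      exact hχzero Pstar (le_antisymm hχle (hχnonneg Pstar))
    rw [hstarP] at hτtend
    -- Step 6: convergence of the minimal values
    have hEtend : Tendsto (fun k => vm (τ k) (Pm (τ k)).1 (Pm (τ k)).2.1 (Pm (τ k)).2.2
        - ψ (Pm (τ k)).1 (Pm (τ k)).2.1 (Pm (τ k)).2.2) atTop
        (nhds (v t₀ x₀ a₀ - φ t₀ x₀ a₀)) := by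
      rw [tendsto_order]
      constructor
      · intro bb hbb
        obtain ⟨j, hj⟩ := (((hvconv t₀ x₀ a₀).sub_const (φ t₀ x₀ a₀)).eventually
          (eventually_gt_nhds hbb)).exists
        have hψP : ψ t₀ x₀ a₀ = φ t₀ x₀ a₀ := by rw [hψdef]; simp [hχ0]
        have htd : Tendsto (fun k => vm j (Pm (τ k)).1 (Pm (τ k)).2.1 (Pm (τ k)).2.2
            - ψ (Pm (τ k)).1 (Pm (τ k)).2.1 (Pm (τ k)).2.2) atTop
            (nhds (vm j t₀ x₀ a₀ - ψ t₀ x₀ a₀)) := by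
          have h0 := ((hcontj j).tendsto ((t₀, x₀, a₀) : ℝ × Evec d × Evec q)).comp hτtend
          simpa only [Function.comp_def] using h0
        have hgt : bb < vm j t₀ x₀ a₀ - ψ t₀ x₀ a₀ := by rw [hψP]; exact hj
        filter_upwards [htd.eventually (eventually_gt_nhds hgt), eventually_ge_atTop j]
          with k hk1 hk2
        have hjk : j ≤ τ k := le_trans hk2 (hτmono.le_apply)
        have := hvm_le j (τ k) hjk (Pm (τ k)).1 (Pm (τ k)).2.1 (Pm (τ k)).2.2
        linarith
      · intro bb hbb
        exact Eventually.of_forall fun k => lt_of_le_of_lt (hEub (τ k)) hbb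
    have hψtend : Tendsto (fun k => ψ (Pm (τ k)).1 (Pm (τ k)).2.1 (Pm (τ k)).2.2) atTop
        (nhds (φ t₀ x₀ a₀)) := by
      have h0 := (hψc.tendsto ((t₀, x₀, a₀) : ℝ × Evec d × Evec q)).comp hτtend
      have hψP : ψ t₀ x₀ a₀ = φ t₀ x₀ a₀ := by rw [hψdef]; simp [hχ0]
      rw [← hψP]
      simpa only [Function.comp_def] using h0
    have hWtend : Tendsto (fun k => vm (τ k) (Pm (τ k)).1 (Pm (τ k)).2.1 (Pm (τ k)).2.2) atTop
        (nhds (v t₀ x₀ a₀)) := by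
      have := hEtend.add hψtend
      simpa using this
    -- Step 7: eventually the obstacle branch fails
    have hobs : ∀ᶠ k in atTop,
        vm (τ k) (Pm (τ k)).1 (Pm (τ k)).2.1 (Pm (τ k)).2.2 - u (Pm (τ k)).1 (Pm (τ k)).2.1 < 0 := by
      have hucomp : Tendsto (fun k => u (Pm (τ k)).1 (Pm (τ k)).2.1) atTop (nhds (u t₀ x₀)) := by
        have hproj : Continuous (fun z : ℝ × Evec d × Evec q => ((z.1, z.2.1) : ℝ × Evec d)) :=
          continuous_fst.prodMk (continuous_snd.fst)
        have h0 := ((hu.comp hproj).tendsto ((t₀, x₀, a₀) : ℝ × Evec d × Evec q)).comp hτtend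
        simpa only [Function.comp_def] using h0
      have := hWtend.sub hucomp
      exact this.eventually (eventually_lt_nhds (by linarith))
    -- Step 8: continuity of coefficients
    have hdistbound : ∀ p r : Evec d × Evec q,
        ‖p.1 - r.1‖ + ‖p.2 - r.2‖ ≤ 2 * dist p r := by
      intro p r
      have h1 : ‖p.1 - r.1‖ = dist p.1 r.1 := (dist_eq_norm _ _).symm
      have h2 : ‖p.2 - r.2‖ = dist p.2 r.2 := (dist_eq_norm _ _).symm
      rw [h1, h2, Prod.dist_eq]
      have h3 := le_max_left (dist p.1 r.1) (dist p.2 r.2)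
      have h4 := le_max_right (dist p.1 r.1) (dist p.2 r.2)
      linarith
    have hbcont : Continuous (fun p : Evec d × Evec q => b p.1 p.2) := by
      refine LipschitzWith.continuous (K := Real.toNNReal (2 * |C| + 1)) ?_
      apply LipschitzWith.of_dist_le_mul
      intro p r
      have h1 := hFC p.1 r.1 p.2 r.2
      have h2 : ‖b p.1 p.2 - b r.1 r.2‖ ≤ C * (‖p.1 - r.1‖ + ‖p.2 - r.2‖) := by
        have := norm_nonneg (σ p.1 p.2 - σ r.1 r.2); linarith
      have h3 := hdistbound p r
      have h4 : C * (‖p.1 - r.1‖ + ‖p.2 - r.2‖) ≤ |C| * (‖p.1 - r.1‖ + ‖p.2 - r.2‖) :=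
        mul_le_mul_of_nonneg_right (le_abs_self C) (by positivity)
      have h5 : |C| * (‖p.1 - r.1‖ + ‖p.2 - r.2‖) ≤ |C| * (2 * dist p r) :=
        mul_le_mul_of_nonneg_left h3 (abs_nonneg C)
      rw [dist_eq_norm, Real.coe_toNNReal _ (by positivity)]
      nlinarith [dist_nonneg (x := p) (y := r), abs_nonneg C]
    have hσcont : Continuous (fun p : Evec d × Evec q => σ p.1 p.2) := by
      refine LipschitzWith.continuous (K := Real.toNNReal (2 * |C| + 1)) ?_
      apply LipschitzWith.of_dist_le_mul
      intro p r
      have h1 := hFC p.1 r.1 p.2 r.2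
      have h2 : ‖σ p.1 p.2 - σ r.1 r.2‖ ≤ C * (‖p.1 - r.1‖ + ‖p.2 - r.2‖) := by
        have := norm_nonneg (b p.1 p.2 - b r.1 r.2); linarith
      have h3 := hdistbound p r
      have h4 : C * (‖p.1 - r.1‖ + ‖p.2 - r.2‖) ≤ |C| * (‖p.1 - r.1‖ + ‖p.2 - r.2‖) :=
        mul_le_mul_of_nonneg_right (le_abs_self C) (by positivity)
      have h5 : |C| * (‖p.1 - r.1‖ + ‖p.2 - r.2‖) ≤ |C| * (2 * dist p r) :=
        mul_le_mul_of_nonneg_left h3 (abs_nonneg C)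
      rw [dist_eq_norm, Real.coe_toNNReal _ (by positivity)]
      nlinarith [dist_nonneg (x := p) (y := r), abs_nonneg C]
    have hψt'c : Continuous (fun p : ℝ × Evec d × Evec q => ψt' p.1 p.2.1 p.2.2) := by
      rw [hψtdef]; exact hφtc.sub hχtc
    have hψx'c : Continuous (fun p : ℝ × Evec d × Evec q => ψx' p.1 p.2.1 p.2.2) := by
      rw [hψxdef]; exact hφxc.sub hχxc
    have hψxx'c : Continuous (fun p : ℝ × Evec d × Evec q => ψxx' p.1 p.2.1 p.2.2) := by
      rw [hψxxdef]; exact hφxxc.sub hχxxc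
    -- Step 9: the integral-free part of the Hamiltonian
    obtain ⟨Ξ, hΞdef⟩ : ∃ Ξ : (ℝ × Evec d × Evec q) × ℝ → ℝ, Ξ = fun zw =>
        -ψt' zw.1.1 zw.1.2.1 zw.1.2.2 -
          (inner ℝ (b zw.1.2.1 zw.1.2.2) (ψx' zw.1.1 zw.1.2.1 zw.1.2.2) : ℝ) -
          (1 / 2) * LinearMap.trace ℝ (Evec d)
            ((σ zw.1.2.1 zw.1.2.2 ∘L ContinuousLinearMap.adjoint (σ zw.1.2.1 zw.1.2.2) ∘L
              ψxx' zw.1.1 zw.1.2.1 zw.1.2.2) : Evec d →ₗ[ℝ] Evec d) -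
          f zw.1.2.1 zw.1.2.2 zw.2
            (ContinuousLinearMap.adjoint (σ zw.1.2.1 zw.1.2.2)
              (ψx' zw.1.1 zw.1.2.1 zw.1.2.2)) := ⟨_, rfl⟩
    have hσ2 : Continuous (fun zw : (ℝ × Evec d × Evec q) × ℝ => σ zw.1.2.1 zw.1.2.2) :=
      hσcont.comp (continuous_fst.snd)
    have hadj : Continuous (fun zw : (ℝ × Evec d × Evec q) × ℝ =>
        ContinuousLinearMap.adjoint (σ zw.1.2.1 zw.1.2.2)) :=
      (ContinuousLinearMap.adjoint (𝕜 := ℝ) (E := Evec d) (F := Evec d)).continuous.comp hσ2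
    have htrmap : Continuous (fun c : Evec d →L[ℝ] Evec d =>
        LinearMap.trace ℝ (Evec d) (c : Evec d →ₗ[ℝ] Evec d)) :=
      LinearMap.continuous_of_finiteDimensional
        ((LinearMap.trace ℝ (Evec d)).comp (ContinuousLinearMap.coeLM ℝ))
    have hΞc : Continuous Ξ := by
      rw [hΞdef]
      refine Continuous.sub (Continuous.sub (Continuous.sub ?_ ?_) ?_) ?_
      · exact (hψt'c.comp continuous_fst).neg
      · exact Continuous.inner (hbcont.comp continuous_fst.snd) (hψx'c.comp continuous_fst)
      · exact continuous_const.mul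
          (htrmap.comp (hσ2.clm_comp (hadj.clm_comp (hψxx'c.comp continuous_fst))))
      · exact hf.comp ((continuous_fst.snd.fst).prodMk ((continuous_fst.snd.snd).prodMk
          (continuous_snd.prodMk (hadj.clm_apply (hψx'c.comp continuous_fst)))))
    have hwtend : Tendsto (fun k =>
        ((Pm (τ k), vm (τ k) (Pm (τ k)).1 (Pm (τ k)).2.1 (Pm (τ k)).2.2) :
          (ℝ × Evec d × Evec q) × ℝ)) atTop
        (nhds (((t₀, x₀, a₀), v t₀ x₀ a₀) : (ℝ × Evec d × Evec q) × ℝ)) :=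
      hτtend.prodMk_nhds hWtend
    have hAk : Tendsto (fun k =>
        Ξ (Pm (τ k), vm (τ k) (Pm (τ k)).1 (Pm (τ k)).2.1 (Pm (τ k)).2.2)) atTop
        (nhds (Ξ ((t₀, x₀, a₀), v t₀ x₀ a₀))) := by
      have h0 := (hΞc.tendsto (((t₀, x₀, a₀), v t₀ x₀ a₀) :
        (ℝ × Evec d × Evec q) × ℝ)).comp hwtend
      simpa only [Function.comp_def] using h0
    have hAbd : ∀ᶠ k in atTop,
        Ξ (Pm (τ k), vm (τ k) (Pm (τ k)).1 (Pm (τ k)).2.1 (Pm (τ k)).2.2) ≤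
          Ξ ((t₀, x₀, a₀), v t₀ x₀ a₀) + 1 :=
      hAk.eventually (eventually_le_nhds (lt_add_one _))
    -- Step 10: the penalization integral tends to 0
    obtain ⟨Ik, hIkdef⟩ : ∃ Ik : ℕ → ℝ, Ik = fun k =>
        ∫ a' in A, max (ψ (Pm (τ k)).1 (Pm (τ k)).2.1 a'
          - ψ (Pm (τ k)).1 (Pm (τ k)).2.1 (Pm (τ k)).2.2) 0 ∂lam := ⟨_, rfl⟩
    have hplink : ∀ k, penalHam d q A lam b σ f (τ k)
        (vm (τ k) (Pm (τ k)).1 (Pm (τ k)).2.1 (Pm (τ k)).2.2) ψ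
        (ψt' (Pm (τ k)).1 (Pm (τ k)).2.1 (Pm (τ k)).2.2)
        (ψx' (Pm (τ k)).1 (Pm (τ k)).2.1 (Pm (τ k)).2.2)
        (ψxx' (Pm (τ k)).1 (Pm (τ k)).2.1 (Pm (τ k)).2.2)
        (Pm (τ k)).1 (Pm (τ k)).2.1 (Pm (τ k)).2.2
        = Ξ (Pm (τ k), vm (τ k) (Pm (τ k)).1 (Pm (τ k)).2.1 (Pm (τ k)).2.2)
          - ((τ k : ℕ) : ℝ) * Ik k := by
      intro k
      rw [hΞdef, hIkdef]
      rfl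
    have hIkbound : ∀ᶠ k in atTop,
        ((τ k : ℕ) : ℝ) * Ik k ≤ Ξ ((t₀, x₀, a₀), v t₀ x₀ a₀) + 1 := by
      filter_upwards [hobs, hAbd] with k h1 h2
      have h3 := hsup (τ k)
      have h4 : 0 ≤ penalHam d q A lam b σ f (τ k)
          (vm (τ k) (Pm (τ k)).1 (Pm (τ k)).2.1 (Pm (τ k)).2.2) ψ
          (ψt' (Pm (τ k)).1 (Pm (τ k)).2.1 (Pm (τ k)).2.2)
          (ψx' (Pm (τ k)).1 (Pm (τ k)).2.1 (Pm (τ k)).2.2)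
          (ψxx' (Pm (τ k)).1 (Pm (τ k)).2.1 (Pm (τ k)).2.2)
          (Pm (τ k)).1 (Pm (τ k)).2.1 (Pm (τ k)).2.2 := by
        rcases le_max_iff.mp h3 with h | h
        · exact h
        · linarith
      rw [hplink k] at h4
      linarith
    have hIknn : ∀ k, 0 ≤ Ik k := by
      intro k
      rw [hIkdef]
      exact MeasureTheory.integral_nonneg fun a' => le_max_right _ _
    have hAmeas : MeasurableSet A := hA.isClosed.measurableSet
    have hcontslice : ∀ z : ℝ × Evec d × Evec q, Continuous (fun a' : Evec q =>
        max (ψ z.1 z.2.1 a' - ψ z.1 z.2.1 z.2.2) 0) := by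
      intro z
      exact ((hψc.comp (continuous_const.prodMk
        (continuous_const.prodMk continuous_id))).sub continuous_const).max continuous_const
    obtain ⟨B, hB⟩ := (hKc.prod hA).exists_bound_of_continuousOn
      (Continuous.continuousOn (f := fun w : (ℝ × Evec d × Evec q) × Evec q =>
        max (ψ w.1.1 w.1.2.1 w.2 - ψ w.1.1 w.1.2.1 w.1.2.2) 0)
        (((hψc.comp ((continuous_fst.fst).prodMk ((continuous_fst.snd.fst).prodMk
          continuous_snd))).sub (hψc.comp continuous_fst)).max continuous_const))
    have hItend : Tendsto Ik atTop
        (nhds (∫ a' in A, max (ψ t₀ x₀ a' - ψ t₀ x₀ a₀) 0 ∂lam)) := by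
      rw [hIkdef]
      refine MeasureTheory.tendsto_integral_of_dominated_convergence (fun _ => B)
        (fun k => (hcontslice (Pm (τ k))).aestronglyMeasurable) (integrable_const B) ?_ ?_
      · intro k
        refine (ae_restrict_iff' hAmeas).2 (Eventually.of_forall ?_)
        intro a' ha'
        exact hB (Pm (τ k), a') ⟨hPmK (τ k), ha'⟩
      · refine Eventually.of_forall ?_
        intro a'
        have hcont : Continuous (fun z : ℝ × Evec d × Evec q =>
            max (ψ z.1 z.2.1 a' - ψ z.1 z.2.1 z.2.2) 0) :=
          ((hψc.comp ((continuous_fst).prodMk ((continuous_snd.fst).prodMk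
            continuous_const))).sub hψc).max continuous_const
        have h0 := (hcont.tendsto ((t₀, x₀, a₀) : ℝ × Evec d × Evec q)).comp hτtend
        simpa only [Function.comp_def] using h0
    have hτatTop : Tendsto (fun k => ((τ k : ℕ) : ℝ)) atTop atTop :=
      tendsto_natCast_atTop_atTop.comp
        (tendsto_atTop_atTop_of_monotone hτmono.monotone fun n => ⟨n, hτmono.le_apply⟩)
    have hIk0 : Tendsto Ik atTop (nhds 0) := by
      refine squeeze_zero' (Eventually.of_forall hIknn)
        (g := fun k => (Ξ ((t₀, x₀, a₀), v t₀ x₀ a₀) + 1) / ((τ k : ℕ) : ℝ)) ?_ ?_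
      · filter_upwards [hIkbound, hτatTop.eventually (eventually_ge_atTop 1)] with k h1 h2
        rw [le_div_iff₀ (by linarith)]
        nlinarith
      · exact Tendsto.div_atTop tendsto_const_nhds hτatTop
    have hI0 : (∫ a' in A, max (ψ t₀ x₀ a' - ψ t₀ x₀ a₀) 0 ∂lam) = 0 :=
      tendsto_nhds_unique hItend hIk0
    -- Step 11: ψ(t₀,x₀,·) has a local max at a₀ over the interior of A
    have hInt : MeasureTheory.Integrable (fun a' => max (ψ t₀ x₀ a' - ψ t₀ x₀ a₀) 0)
        (lam.restrict A) :=
      ContinuousOn.integrableOn_compact hA (Continuous.continuousOn (hcontslice (t₀, x₀, a₀)))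
    have hae := (MeasureTheory.integral_eq_zero_iff_of_nonneg
      (fun a' => le_max_right _ _) hInt).1 hI0
    have hslice : ∀ α ∈ interior A, ψ t₀ x₀ α ≤ ψ t₀ x₀ a₀ := by
      by_contra hcon
      push_neg at hcon
      obtain ⟨α₀, hα₀A, hα₀⟩ := hcon
      have hOopen : IsOpen {α : Evec q | ψ t₀ x₀ a₀ < ψ t₀ x₀ α} :=
        isOpen_lt continuous_const (hψc.comp (continuous_const.prodMk
          (continuous_const.prodMk continuous_id)))
      have hpos := hlam α₀ hα₀A _ hOopen hα₀
      have hsub : ({α : Evec q | ψ t₀ x₀ a₀ < ψ t₀ x₀ α} ∩ interior A) ⊆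
          {a' : Evec q | ¬ (max (ψ t₀ x₀ a' - ψ t₀ x₀ a₀) 0 = 0)} := by
        intro α hα
        simp only [mem_setOf_eq]
        intro hc
        have hgt : 0 < ψ t₀ x₀ α - ψ t₀ x₀ a₀ := sub_pos.2 hα.1
        have := le_max_left (ψ t₀ x₀ α - ψ t₀ x₀ a₀) (0:ℝ)
        rw [hc] at this
        linarith
      have hae' : ∀ᵐ a' ∂(lam.restrict A), max (ψ t₀ x₀ a' - ψ t₀ x₀ a₀) 0 = 0 := by
        filter_upwards [hae] with a' ha' using by simpa using ha'
      have hnull := MeasureTheory.ae_iff.1 hae'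
      have h0 : lam.restrict A ({α : Evec q | ψ t₀ x₀ a₀ < ψ t₀ x₀ α} ∩ interior A) = 0 :=
        measure_mono_null hsub hnull
      rw [Measure.restrict_apply' hAmeas] at h0
      have hSA : (({α : Evec q | ψ t₀ x₀ a₀ < ψ t₀ x₀ α} ∩ interior A) ∩ A) =
          ({α : Evec q | ψ t₀ x₀ a₀ < ψ t₀ x₀ α} ∩ interior A) :=
        inter_eq_self_of_subset_left (inter_subset_right.trans interior_subset)
      rw [hSA] at h0
      rw [h0] at hpos
      exact lt_irrefl _ hpos
    -- Step 12: conclusion via vanishing gradients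
    have hlocmax : IsLocalMax (fun α => ψ t₀ x₀ α) a₀ := by
      filter_upwards [isOpen_interior.mem_nhds ha₀] with α hα using hslice α hα
    have hJa : HasFDerivAt (fun α : Evec q => ((t₀, x₀, α) : ℝ × Evec d × Evec q)) (Ja d q) a₀ :=
      (hasFDerivAt_const t₀ a₀).prodMk ((hasFDerivAt_const x₀ a₀).prodMk (hasFDerivAt_id a₀))
    have hχa : HasFDerivAt (fun α : Evec q => χ (t₀, x₀, α))
        ((fderiv ℝ χ (t₀, x₀, a₀)) ∘L (Ja d q)) a₀ := (hχfd _).comp a₀ hJa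
    have hψa : HasFDerivAt (fun α : Evec q => ψ t₀ x₀ α)
        ((InnerProductSpace.toDual ℝ (Evec q)) (Daφ t₀ x₀ a₀) -
          ((fderiv ℝ χ (t₀, x₀, a₀)) ∘L (Ja d q))) a₀ := by
      rw [hψdef]
      exact (hDa t₀ x₀ a₀).hasFDerivAt.sub hχa
    have h1 := hlocmax.hasFDerivAt_eq_zero hψa
    have hχminloc : IsLocalMin (fun α : Evec q => χ (t₀, x₀, α)) a₀ :=
      Eventually.of_forall fun α => hχ0.le.trans (hχnonneg _)
    have h2 := hχminloc.hasFDerivAt_eq_zero hχa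
    apply (InnerProductSpace.toDual ℝ (Evec q)).injective
    rw [map_zero]
    rw [h2, sub_zero] at h1
    exact h1

end
end
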